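/- arXiv:1811.01162 — 9 statements merged into one kernel-verified Lean document; each statement's English description precedes it below -/
import Mathlib

section
/- For every finite simple graph G = (V, E) of maximum degree at most Δ and every positive integer p, the vertex set V can be partitioned into p color classes V^1, …, V^p such that every vertex has at most ⌊Δ/p⌋ neighbors lying in its own color class (i.e., G admits a defective (p, ⌊Δ/p⌋)-coloring). -/
open SimpleGraph

/-- `G` contains a path of order `k` (i.e., with `k` vertices). -/
def HasPathOfOrder {V : Type*} (G : SimpleGraph V) (k : ℕ) : Prop :=
  ∃ (u v : V) (w : G.Walk u v), w.IsPath ∧ w.length + 1 = k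

/-- `F` is a `k`-path vertex cover of `G`: the subgraph induced on the
complement of `F` contains no path of order `k`. -/
def IsPathVertexCover {V : Type*} (G : SimpleGraph V) (k : ℕ) (F : Finset V) : Prop :=
  ¬ HasPathOfOrder (G.induce ((↑F : Set V)ᶜ)) k

/-- `psi G k` is the minimum cardinality of a `k`-path vertex cover of `G`. -/
noncomputable def psi {V : Type*} [Fintype V] (G : SimpleGraph V) (k : ℕ) : ℕ :=
  sInf {n | ∃ F : Finset V, IsPathVertexCover G k F ∧ F.card = n}

/-! Colour so as to minimise the number of monochromatic edges (`sameColorDegreeSum` counts each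
twice). If a vertex `v` had more than `⌊Δ/p⌋` neighbours of its own colour, then by pigeonhole some
colour occurs at most `⌊Δ/p⌋` times among its at most `Δ` neighbours, and recolouring `v` with it
would strictly decrease that number, since only the edges at `v` are affected. -/

open Finset

theorem Finset.sum_sum_eq_two_nsmul_add_sum_sum_erase {ι M : Type*} [Fintype ι] [DecidableEq ι]
    [AddCommMonoid M] (f : ι → ι → M) (hf : ∀ u w, f u w = f w u) (v : ι) (hv : f v v = 0) :
    ∑ u, ∑ w, f u w = 2 • ∑ w, f v w + ∑ u ∈ univ.erase v, ∑ w ∈ univ.erase v, f u w := by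
  have hcol : ∑ u ∈ univ.erase v, f u v = ∑ w, f v w := by
    rw [← add_sum_erase _ _ (mem_univ v), hv, zero_add]
    exact sum_congr rfl fun u _ => hf u v
  rw [← add_sum_erase _ _ (mem_univ v),
    sum_congr rfl fun u _ => (add_sum_erase univ (f u) (mem_univ v)).symm,
    sum_add_distrib, hcol, two_nsmul, add_assoc]

namespace SimpleGraph

variable {V α : Type*} [Fintype V] [DecidableEq α] (G : SimpleGraph V) [DecidableRel G.Adj]

def colorDegree (c : V → α) (v : V) (i : α) : ℕ := #{w ∈ G.neighborFinset v | c w = i}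

theorem colorDegree_eq_sum (c : V → α) (v : V) (i : α) :
    G.colorDegree c v i = ∑ w, if G.Adj v w ∧ c w = i then 1 else 0 := by
  rw [colorDegree, neighborFinset_eq_filter, filter_filter, card_filter]

theorem colorDegree_congr {c c' : V → α} {v : V} (h : ∀ w ≠ v, c w = c' w) (i : α) :
    G.colorDegree c v i = G.colorDegree c' v i := by
  refine congrArg card (filter_congr fun w hw => ?_)
  rw [h w (G.ne_of_adj ((G.mem_neighborFinset v w).1 hw)).symm]

def sameColorDegreeSum (c : V → α) : ℕ := ∑ u, G.colorDegree c u (c u)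

theorem sameColorDegreeSum_add_eq {c c' : V → α} {v : V} (h : ∀ w ≠ v, c w = c' w) :
    G.sameColorDegreeSum c + 2 * G.colorDegree c' v (c' v) =
      G.sameColorDegreeSum c' + 2 * G.colorDegree c v (c v) := by
  classical
  have split : ∀ d : V → α, G.sameColorDegreeSum d = 2 * G.colorDegree d v (d v) +
      ∑ u ∈ univ.erase v, ∑ w ∈ univ.erase v, if G.Adj u w ∧ d w = d u then 1 else 0 := by
    intro d
    simp only [sameColorDegreeSum, colorDegree_eq_sum, ← smul_eq_mul]
    exact sum_sum_eq_two_nsmul_add_sum_sum_erase _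
      (fun u w => by simp only [G.adj_comm u w, eq_comm]) v (by simp)
  have hrest : (∑ u ∈ univ.erase v, ∑ w ∈ univ.erase v,
      if G.Adj u w ∧ c w = c u then 1 else 0) = ∑ u ∈ univ.erase v, ∑ w ∈ univ.erase v,
      if G.Adj u w ∧ c' w = c' u then 1 else 0 :=
    sum_congr rfl fun u hu => sum_congr rfl fun w hw => by
      rw [h u (ne_of_mem_erase hu), h w (ne_of_mem_erase hw)]
  rw [split c, split c', hrest]
  ring

theorem colorDegree_self_le_of_forall_le {c : V → α}
    (hc : ∀ c' : V → α, G.sameColorDegreeSum c ≤ G.sameColorDegreeSum c') (v : V) (i : α) :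
    G.colorDegree c v (c v) ≤ G.colorDegree c v i := by
  classical
  have hupd : G.colorDegree (Function.update c v i) v i = G.colorDegree c v i :=
    G.colorDegree_congr (fun w hw => Function.update_of_ne hw _ _) i
  have hrecolor := G.sameColorDegreeSum_add_eq (c' := Function.update c v i)
    (fun w hw => (Function.update_of_ne hw _ _).symm)
  rw [Function.update_self, hupd] at hrecolor
  have hmin := hc (Function.update c v i)
  omega

theorem exists_colorDegree_le [Fintype α] [Nonempty α] (c : V → α) {v : V} {Δ : ℕ}
    (hv : G.degree v ≤ Δ) : ∃ i, G.colorDegree c v i ≤ Δ / Fintype.card α := by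
  have hdeg : #(G.neighborFinset v) < #(univ : Finset α) * (Δ / Fintype.card α + 1) := by
    rw [card_univ, card_neighborFinset_eq_degree]
    exact hv.trans_lt (Nat.lt_mul_div_succ Δ Fintype.card_pos)
  obtain ⟨i, -, hi⟩ := exists_card_fiber_lt_of_card_lt_mul (f := c) hdeg
  exact ⟨i, Nat.lt_succ_iff.1 hi⟩

end SimpleGraph

/-- Any graph of maximum degree at most `Δ` admits a defective
`(p, ⌊Δ/p⌋)`-coloring: a coloring with `p` colors such that every vertex has
at most `⌊Δ/p⌋` neighbors of its own color. -/
theorem stmt_0 {V : Type*} [Fintype V] (G : SimpleGraph V) [DecidableRel G.Adj]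
    (Δ p : ℕ) (hp : 0 < p) (hΔ : ∀ v, G.degree v ≤ Δ) :
    ∃ c : V → Fin p,
      ∀ v, ((G.neighborFinset v).filter (fun w => c w = c v)).card ≤ Δ / p := by
  classical
  have : Nonempty (Fin p) := ⟨⟨0, hp⟩⟩
  obtain ⟨c, -, hc⟩ :=
    exists_min_image (univ : Finset (V → Fin p)) G.sameColorDegreeSum univ_nonempty
  refine ⟨c, fun v => ?_⟩
  obtain ⟨i, hi⟩ := G.exists_colorDegree_le c (hΔ v)
  rw [Fintype.card_fin] at hi
  exact (G.colorDegree_self_le_of_forall_le (fun c' => hc c' (mem_univ _)) v i).trans hi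
end

section
/- Every d-regular finite simple graph G = (V, E) with d ≥ 1 has a 3-path vertex cover F with |F| ≤ (1 − 1/(⌊d/2⌋ + 1))·|V| = (⌊d/2⌋/(⌊d/2⌋ + 1))·|V|. -/
open SimpleGraph

open Finset


open SimpleGraph Finset

private def Wt {V : Type*} [Fintype V] (G : SimpleGraph V) [DecidableRel G.Adj]
    {k : ℕ} (f : V → Fin k) : ℕ :=
  ∑ w : V, ((G.neighborFinset w).filter fun u => f u = f w).card

private lemma Wt_update {V : Type*} [Fintype V] [DecidableEq V] (G : SimpleGraph V)
    [DecidableRel G.Adj] {k : ℕ} (f : V → Fin k) (v : V) (j : Fin k) (hj : j ≠ f v) :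
    Wt G (Function.update f v j) + 2 * ((G.neighborFinset v).filter fun u => f u = f v).card
      = Wt G f + 2 * ((G.neighborFinset v).filter fun u => f u = j).card := by
  classical
  set f' := Function.update f v j with hf'
  set A := ((G.neighborFinset v).filter fun u => f u = f v).card with hA
  set B := ((G.neighborFinset v).filter fun u => f u = j).card with hB
  have hfu : ∀ u : V, u ≠ v → f' u = f u := by
    intro u hu; simp [hf', Function.update_of_ne hu]
  have hfv : f' v = j := by simp [hf']
  set g : V → ℕ := fun w => ((G.neighborFinset w).filter fun u => f u = f w).card with hg
  set g' : V → ℕ := fun w => ((G.neighborFinset w).filter fun u => f' u = f' w).card with hg'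
  set H : V → ℕ := fun w => if w = v then A else
    if G.Adj v w then (if f w = f v then 1 else 0) else 0 with hH
  set H' : V → ℕ := fun w => if w = v then B else
    if G.Adj v w then (if f w = j then 1 else 0) else 0 with hH'
  have key : ∀ w : V, g' w + H w = g w + H' w := by
    intro w
    rcases eq_or_ne w v with hwv | hw
    · -- w = v : g' v = B, g v = A
      subst hwv
      have h1 : g' w = B := by
        simp only [hg', hB]
        congr 1
        apply filter_congr
        intro u hu
        have huv : u ≠ w := by
          rintro rfl; exact G.notMem_neighborFinset_self _ hu
        simp [hfu u huv, hfv]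
      have h2 : g w = A := rfl
      simp only [hH, hH', if_pos (rfl : w = w), h1, h2]
      omega
    · rcases em (G.Adj v w) with hmem | hmem
      · -- w a neighbor of v
        have hvw : v ∈ G.neighborFinset w := by
          rw [mem_neighborFinset]; exact hmem.symm
        have hsplit : ∀ (c : Fin k),
            ((G.neighborFinset w).filter fun u => f u = c).card
              = ∑ u ∈ (G.neighborFinset w).erase v, (if f u = c then 1 else 0)
                + (if f v = c then 1 else 0) := by
          intro c
          rw [Finset.card_filter, ← Finset.sum_erase_add _ _ hvw]
        have hsplit' : ∀ (c : Fin k),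
            ((G.neighborFinset w).filter fun u => f' u = c).card
              = ∑ u ∈ (G.neighborFinset w).erase v, (if f u = c then 1 else 0)
                + (if j = c then 1 else 0) := by
          intro c
          rw [Finset.card_filter, ← Finset.sum_erase_add _ _ hvw, hfv]
          congr 1
          apply Finset.sum_congr rfl
          intro u hu
          rw [hfu u (Finset.ne_of_mem_erase hu)]
        have h1 : g' w = ∑ u ∈ (G.neighborFinset w).erase v, (if f u = f w then 1 else 0)
            + (if j = f w then 1 else 0) := by
          rw [hg']
          simp only [hfu w hw]
          exact hsplit' (f w)
        have h2 : g w = ∑ u ∈ (G.neighborFinset w).erase v, (if f u = f w then 1 else 0)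
            + (if f v = f w then 1 else 0) := hsplit (f w)
        have hHw : H w = if f w = f v then 1 else 0 := by
          simp only [hH]; rw [if_neg hw, if_pos hmem]
        have hH'w : H' w = if f w = j then 1 else 0 := by
          simp only [hH']; rw [if_neg hw, if_pos hmem]
        have e1 : (if f v = f w then (1:ℕ) else 0) = if f w = f v then 1 else 0 := by
          by_cases h : f v = f w
          · rw [if_pos h, if_pos h.symm]
          · rw [if_neg h, if_neg fun hh => h hh.symm]
        have e2 : (if j = f w then (1:ℕ) else 0) = if f w = j then 1 else 0 := by
          by_cases h : j = f w
          · rw [if_pos h, if_pos h.symm]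
          · rw [if_neg h, if_neg fun hh => h hh.symm]
        rw [h1, h2, hHw, hH'w, e1, e2]
        omega
      · -- w not a neighbor of v, w ≠ v : nothing changes
        have h1 : g' w = g w := by
          simp only [hg', hg, hfu w hw]
          congr 1
          apply filter_congr
          intro u hu
          have huv : u ≠ v := by
            rintro rfl
            rw [mem_neighborFinset] at hu
            exact hmem hu.symm
          rw [hfu u huv]
        have hHw : H w = 0 := by simp only [hH]; rw [if_neg hw, if_neg hmem]
        have hH'w : H' w = 0 := by simp only [hH']; rw [if_neg hw, if_neg hmem]
        rw [h1, hHw, hH'w]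
  have hsub : G.neighborFinset v ⊆ Finset.univ.erase v :=
    Finset.subset_erase.mpr ⟨Finset.subset_univ _, G.notMem_neighborFinset_self v⟩
  have hsumH : ∑ w : V, H w = 2 * A := by
    rw [← Finset.sum_erase_add _ _ (Finset.mem_univ v)]
    have h2 : H v = A := by simp [hH]
    have h1 : ∑ w ∈ Finset.univ.erase v, H w = A := by
      rw [show A = ∑ w ∈ G.neighborFinset v, (if f w = f v then 1 else 0) from
        Finset.card_filter _ _]
      rw [← Finset.sum_subset hsub (by
        intro w hw hnw
        have hne := Finset.ne_of_mem_erase hw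
        rw [mem_neighborFinset] at hnw
        simp only [hH]; rw [if_neg hne, if_neg hnw])]
      apply Finset.sum_congr rfl
      intro w hw
      have hadj : G.Adj v w := (mem_neighborFinset G v w).mp hw
      have hne : w ≠ v := (G.ne_of_adj hadj).symm
      simp only [hH]; rw [if_neg hne, if_pos hadj]
    omega
  have hsumH' : ∑ w : V, H' w = 2 * B := by
    rw [← Finset.sum_erase_add _ _ (Finset.mem_univ v)]
    have h2 : H' v = B := by simp [hH']
    have h1 : ∑ w ∈ Finset.univ.erase v, H' w = B := by
      rw [show B = ∑ w ∈ G.neighborFinset v, (if f w = j then 1 else 0) from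
        Finset.card_filter _ _]
      rw [← Finset.sum_subset hsub (by
        intro w hw hnw
        have hne := Finset.ne_of_mem_erase hw
        rw [mem_neighborFinset] at hnw
        simp only [hH']; rw [if_neg hne, if_neg hnw])]
      apply Finset.sum_congr rfl
      intro w hw
      have hadj : G.Adj v w := (mem_neighborFinset G v w).mp hw
      have hne : w ≠ v := (G.ne_of_adj hadj).symm
      simp only [hH']; rw [if_neg hne, if_pos hadj]
    omega
  have hWsum : Wt G f' + ∑ w : V, H w = Wt G f + ∑ w : V, H' w := by
    rw [Wt, Wt, ← Finset.sum_add_distrib, ← Finset.sum_add_distrib]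
    exact Finset.sum_congr rfl fun w _ => key w
  rw [hsumH, hsumH'] at hWsum
  exact hWsum


/-- Every `d`-regular graph (`d ≥ 1`) has a `3`-path vertex cover `F` with
`|F| ≤ (⌊d/2⌋/(⌊d/2⌋+1))·|V|`. -/
theorem stmt_1 {V : Type*} [Fintype V] (G : SimpleGraph V) [DecidableRel G.Adj]
    (d : ℕ) (hd : 1 ≤ d) (hreg : G.IsRegularOfDegree d) :
    ∃ F : Finset V, IsPathVertexCover G 3 F ∧
      (d / 2 + 1) * F.card ≤ (d / 2) * Fintype.card V := by
  classical
  set c := d / 2 with hc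
  have hd2 : d ≤ 2 * c + 1 := by omega
  obtain ⟨f, hf⟩ := Nat.sInf_mem (⟨Wt G (fun _ : V => (0 : Fin (c+1))), ⟨_, rfl⟩⟩ :
    Set.Nonempty {n | ∃ f : V → Fin (c+1), Wt G f = n})
  have hmin : ∀ g : V → Fin (c+1), Wt G f ≤ Wt G g := by
    intro g; rw [hf]; exact Nat.sInf_le ⟨g, rfl⟩
  have hmono : ∀ v : V, ((G.neighborFinset v).filter fun u => f u = f v).card ≤ 1 := by
    intro v
    by_contra hA
    push_neg at hA
    have hfiber : ∑ jj : Fin (c+1), ((G.neighborFinset v).filter fun u => f u = jj).card = d := by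
      rw [← Finset.card_eq_sum_card_fiberwise (fun x _ => Finset.mem_univ (f x)),
        G.card_neighborFinset_eq_degree]
      exact hreg v
    obtain ⟨jj, hjj, hBle⟩ : ∃ jj : Fin (c+1), jj ≠ f v ∧
        ((G.neighborFinset v).filter fun u => f u = jj).card ≤ 1 := by
      by_contra h
      push_neg at h
      have h2 : ∀ jj ∈ Finset.univ.erase (f v),
          2 ≤ ((G.neighborFinset v).filter fun u => f u = jj).card := by
        intro jj hjj; exact h jj (Finset.ne_of_mem_erase hjj)
      have hcard : (Finset.univ.erase (f v)).card = c := by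
        rw [Finset.card_erase_of_mem (Finset.mem_univ _), Finset.card_univ, Fintype.card_fin]
        rfl
      have hge : 2 * c ≤ ∑ jj ∈ Finset.univ.erase (f v),
          ((G.neighborFinset v).filter fun u => f u = jj).card := by
        calc 2 * c = ∑ _jj ∈ Finset.univ.erase (f v), 2 := by
              rw [Finset.sum_const, hcard]; ring
        _ ≤ _ := Finset.sum_le_sum h2
      have hsplit : ∑ jj ∈ Finset.univ.erase (f v),
            ((G.neighborFinset v).filter fun u => f u = jj).card
          + ((G.neighborFinset v).filter fun u => f u = f v).card
          = ∑ jj : Fin (c+1), ((G.neighborFinset v).filter fun u => f u = jj).card :=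
        Finset.sum_erase_add Finset.univ
          (fun jj => ((G.neighborFinset v).filter fun u => f u = jj).card) (Finset.mem_univ (f v))
      omega
    have hup := Wt_update G f v jj hjj
    have hmm := hmin (Function.update f v jj)
    omega
  obtain ⟨i, hi⟩ : ∃ i : Fin (c+1),
      Fintype.card V ≤ (c+1) * (Finset.univ.filter fun v => f v = i).card := by
    by_contra h
    push_neg at h
    have hsum : ∑ i : Fin (c+1), (Finset.univ.filter fun v => f v = i).card
        = Fintype.card V := by
      rw [← Finset.card_eq_sum_card_fiberwise (fun x _ => Finset.mem_univ (f x)),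
        Finset.card_univ]
    have hle : ∑ i : Fin (c+1), (c+1) * (Finset.univ.filter fun v => f v = i).card
        ≤ ∑ _i : Fin (c+1), (Fintype.card V - 1) := by
      apply Finset.sum_le_sum; intro i _
      have := h i; omega
    rw [← Finset.mul_sum, hsum, Finset.sum_const, Finset.card_univ, Fintype.card_fin,
      smul_eq_mul] at hle
    have hn : Fintype.card V ≤ Fintype.card V - 1 :=
      Nat.le_of_mul_le_mul_left hle (by omega)
    have hcontra := h ⟨0, Nat.succ_pos c⟩
    have h0 : Fintype.card V = 0 := by omega
    rw [h0] at hcontra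
    omega
  refine ⟨Finset.univ.filter fun v => f v ≠ i, ?_, ?_⟩
  · intro hpath
    obtain ⟨a, b, w, hp, hl⟩ := hpath
    have hmemS : ∀ x : V,
        x ∈ ((↑(Finset.univ.filter fun v => f v ≠ i) : Set V)ᶜ) ↔ f x = i := by
      intro x; simp
    cases w with
    | nil => simp at hl
    | cons h p =>
      rename_i x
      cases p with
      | nil => simp at hl
      | cons h' q =>
        rename_i y
        cases q with
        | cons h'' r => simp [Walk.length_cons] at hl
        | nil =>
          simp only [Walk.isPath_def, Walk.support_cons, Walk.support_nil] at hp
          have hax : a ≠ x := by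
            intro hh; rw [hh] at hp; simp at hp
          have hab : a ≠ b := by
            intro hh; rw [hh] at hp; simp at hp
          have h1 : G.Adj ↑a ↑x := h
          have h2 : G.Adj ↑x ↑b := h'
          have hfa : f ↑a = i := (hmemS ↑a).mp a.2
          have hfx : f ↑x = i := (hmemS ↑x).mp x.2
          have hfb : f ↑b = i := (hmemS ↑b).mp b.2
          have hx := hmono ↑x
          have hm1 : (↑a : V) ∈ (G.neighborFinset ↑x).filter fun u => f u = f ↑x := by
            rw [Finset.mem_filter, mem_neighborFinset]
            exact ⟨h1.symm, by rw [hfa, hfx]⟩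
          have hm2 : (↑b : V) ∈ (G.neighborFinset ↑x).filter fun u => f u = f ↑x := by
            rw [Finset.mem_filter, mem_neighborFinset]
            exact ⟨h2, by rw [hfb, hfx]⟩
          have hane : (↑a : V) ≠ ↑b := fun hh => hab (Subtype.coe_injective hh)
          have h2le : 1 < ((G.neighborFinset ↑x).filter fun u => f u = f ↑x).card :=
            Finset.one_lt_card.mpr ⟨_, hm1, _, hm2, hane⟩
          omega
  · have hcompl := Finset.card_filter_add_card_filter_not
      (s := (Finset.univ : Finset V)) (p := fun v => f v = i)
    rw [Finset.card_univ] at hcompl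
    have hkey : (c+1) * (Finset.univ.filter fun v => ¬ f v = i).card
        + (c+1) * (Finset.univ.filter fun v => f v = i).card
        = c * Fintype.card V + Fintype.card V := by
      rw [← Nat.mul_add]
      rw [show (Finset.univ.filter fun v => ¬ f v = i).card
        + (Finset.univ.filter fun v => f v = i).card = Fintype.card V by omega]
      ring
    have : (Finset.univ.filter fun v => f v ≠ i) = (Finset.univ.filter fun v => ¬ f v = i) := rfl
    rw [this]
    omega
end

section
/- If G = (V, E) is a d-regular finite simple graph and k ≥ 2 is an integer with d ≥ k − 1, then ψ_k(G) ≥ ((d − k + 2)/(2d − k + 2))·|V|. -/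
open SimpleGraph

/-!
Let `F` be a minimum `k`-path vertex cover and `S` its complement. As `G[S]` has no path on `k`
vertices, the Erdős–Gallai theorem bounds the degree sum of `G[S]` by `(k - 2)|S|`. Every vertex
of `S` has `d` neighbours and `F` absorbs at most `d|F|` of the edges leaving `S`, so
`d|S| ≤ (k - 2)|S| + d|F|`, which together with `|S| + |F| = |V|` is the claim.

Erdős–Gallai goes by induction on the vertex set. A vertex of degree at most `(k - 2)/2` can be
deleted. Otherwise the ends of a longest path have degree sum exceeding its length, Pósa rotation
turns the path into a cycle on the same fewer than `k` vertices, maximality shows that no edge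
leaves this set, and it is split off.
-/

open Finset

namespace SimpleGraph

variable {V W : Type*}

lemma HasPathOfOrder.map {G : SimpleGraph V} {H : SimpleGraph W} {k : ℕ} (f : G ↪g H)
    (h : HasPathOfOrder G k) : HasPathOfOrder H k := by
  obtain ⟨u, v, p, hp, hlen⟩ := h
  exact ⟨_, _, p.map f.toHom, hp.map f.injective, by simpa using hlen⟩

lemma hasPathOfOrder_of_isPath {H : SimpleGraph W} {k : ℕ} {x y : W} {p : H.Walk x y}
    (hp : p.IsPath) (hk : 0 < k) (hlen : k ≤ p.length + 1) : HasPathOfOrder H k :=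
  ⟨_, _, p.take (k - 1), hp.take _, by simp only [Walk.take_length]; omega⟩

def Walk.IsLongestPath {H : SimpleGraph W} {x y : W} (p : H.Walk x y) : Prop :=
  p.IsPath ∧ ∀ (u v : W) (q : H.Walk u v), q.IsPath → q.length ≤ p.length

lemma exists_isLongestPath [Fintype W] [Nonempty W] (H : SimpleGraph W) :
    ∃ (x y : W) (p : H.Walk x y), p.IsLongestPath := by
  obtain ⟨w⟩ := ‹Nonempty W›
  let lengths : Set ℕ := {n | ∃ (u v : W) (q : H.Walk u v), q.IsPath ∧ q.length = n}
  have hbdd : BddAbove lengths :=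
    ⟨Fintype.card W, by rintro _ ⟨u, v, q, hq, rfl⟩; exact hq.length_lt.le⟩
  obtain ⟨x, y, p, hp, hlen⟩ := Nat.sSup_mem (s := lengths) ⟨0, w, w, .nil, .nil, rfl⟩ hbdd
  exact ⟨x, y, p, hp, fun u v q hq => hlen ▸ le_csSup hbdd ⟨u, v, q, hq, rfl⟩⟩

namespace Walk

variable {H : SimpleGraph W} {x y a b : W}

lemma IsLongestPath.of_length_eq {p : H.Walk x y} {q : H.Walk a b} (hp : p.IsLongestPath)
    (hq : q.IsPath) (hlen : q.length = p.length) : q.IsLongestPath :=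
  ⟨hq, hlen ▸ hp.2⟩

lemma IsLongestPath.reverse {p : H.Walk x y} (hp : p.IsLongestPath) : p.reverse.IsLongestPath :=
  hp.of_length_eq hp.1.reverse p.length_reverse

lemma IsLongestPath.mem_support_of_adj_start {p : H.Walk x y} (hp : p.IsLongestPath)
    (h : H.Adj x a) : a ∈ p.support := by
  by_contra ha
  have := hp.2 _ _ _ (hp.1.cons (h := h.symm) ha)
  simp at this

lemma IsLongestPath.mem_support_of_adj_end {p : H.Walk x y} (hp : p.IsLongestPath)
    (h : H.Adj y a) : a ∈ p.support := by
  simpa using hp.reverse.mem_support_of_adj_start h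

lemma exists_eq_append_cons_of_mem_darts {p : H.Walk x y} {d : H.Dart} (hd : d ∈ p.darts) :
    ∃ (t : H.Walk x d.fst) (r : H.Walk d.snd y), p = t.append (cons d.adj r) := by
  obtain ⟨t, r, rfl⟩ := (isSubwalk_toWalk_adj_iff_mem_darts p).2 hd
  exact ⟨t, r, by rw [← append_assoc]; rfl⟩

lemma exists_crossing_chords [H.LocallyFinite] {p : H.Walk x y}
    (hx : ∀ z, H.Adj x z → z ∈ p.support) (hy : ∀ z, H.Adj y z → z ∈ p.support)
    (hdeg : p.length < H.degree x + H.degree y) :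
    ∃ (d : H.Dart) (t : H.Walk x d.fst) (r : H.Walk d.snd y),
      p = t.append (cons d.adj r) ∧ H.Adj x d.snd ∧ H.Adj y d.fst := by
  classical
  let A := p.darts.toFinset.filter (fun d => H.Adj x d.snd)
  let B := p.darts.toFinset.filter (fun d => H.Adj y d.fst)
  have hA : H.degree x ≤ #A := by
    rw [← card_neighborFinset_eq_degree]
    refine (card_le_card fun z hz => ?_).trans (card_image_le (f := (·.snd)))
    rw [mem_neighborFinset] at hz
    have hz' : z ∈ p.darts.map (·.snd) := by
      rw [map_snd_darts]
      have := hx z hz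
      rw [← cons_tail_support] at this
      exact (List.mem_cons.1 this).resolve_left (H.ne_of_adj hz).symm
    obtain ⟨d, hd, rfl⟩ := List.mem_map.1 hz'
    exact mem_image.2 ⟨d, by simp [A, hd, hz], rfl⟩
  have hB : H.degree y ≤ #B := by
    rw [← card_neighborFinset_eq_degree]
    refine (card_le_card fun z hz => ?_).trans (card_image_le (f := (·.fst)))
    rw [mem_neighborFinset] at hz
    have hz' : z ∈ p.darts.map (·.fst) := by
      have := hy z hz
      rw [← map_fst_darts_append] at this
      exact (List.mem_append.1 this).resolve_right (by simpa using (H.ne_of_adj hz).symm)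
    obtain ⟨d, hd, rfl⟩ := List.mem_map.1 hz'
    exact mem_image.2 ⟨d, by simp [B, hd, hz], rfl⟩
  have hAB : #(A ∪ B) ≤ p.length :=
    (card_le_card (union_subset (filter_subset _ _) (filter_subset _ _))).trans
      (p.darts.toFinset_card_le.trans_eq p.length_darts)
  obtain ⟨d, hd⟩ : (A ∩ B).Nonempty := by
    rw [← card_pos]
    have := card_union_add_card_inter A B
    omega
  simp only [A, B, mem_inter, mem_filter, List.mem_toFinset] at hd
  obtain ⟨t, r, hp⟩ := exists_eq_append_cons_of_mem_darts hd.1.1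
  exact ⟨d, t, r, hp, hd.1.2, hd.2.2⟩

lemma exists_closed_walk_of_crossing_chords (t : H.Walk x a) (h : H.Adj a b) (r : H.Walk b y)
    (hxb : H.Adj x b) (hya : H.Adj y a) :
    ∃ c : H.Walk x x, c.length = (t.append (cons h r)).length + 1 ∧
      c.support.tail.Perm (t.append (cons h r)).support := by
  refine ⟨t.append (cons hya.symm (r.reverse.concat hxb.symm)), ?_, ?_⟩
  · simp only [length_append, length_cons, length_concat, length_reverse]
    omega
  simp only [support_append, support_cons, support_concat, support_reverse, List.tail_cons]
  rw [← cons_tail_support t]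
  simp only [List.cons_append, List.tail_cons]
  exact ((List.perm_append_singleton _ _).append_left _).trans
    (List.perm_middle.trans (((List.reverse_perm _).append_left _).cons x))

lemma exists_isPath_of_support_tail_nodup {c : H.Walk x x} (hc : c.support.tail.Nodup)
    (hnil : ¬ c.Nil) (ha : a ∈ c.support) :
    ∃ (b : W) (q : H.Walk a b), q.IsPath ∧ q.length + 1 = c.length ∧
      q.support.Perm c.support.tail := by
  classical
  have hrot := (support_rotate c a ha).perm
  obtain ⟨b, h, q, hq⟩ := not_nil_iff.1 (show ¬ (c.rotate a ha).Nil by simpa using hnil)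
  rw [hq, support_cons, List.tail_cons] at hrot
  refine ⟨b, q.reverse, (isPath_def _).2 ?_, ?_, ?_⟩
  · simpa using hrot.nodup_iff.2 hc
  · have := congrArg length hq
    simp only [length_rotate, length_cons, length_reverse] at this ⊢
    omega
  · simpa using (List.reverse_perm _).trans hrot

/-- Pósa rotation: the crossing chords close `p` into a cycle on its vertex set, so every vertex
of `p` is the end of another longest path, and maximality keeps its neighbours on `p`. -/
lemma IsLongestPath.mem_support_of_adj [H.LocallyFinite] {p : H.Walk x y}
    (hp : p.IsLongestPath) (hdeg : p.length < H.degree x + H.degree y) (ha : a ∈ p.support)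
    (hab : H.Adj a b) : b ∈ p.support := by
  obtain ⟨d, t, r, rfl, hxb, hya⟩ := exists_crossing_chords
    (fun _ => hp.mem_support_of_adj_start) (fun _ => hp.mem_support_of_adj_end) hdeg
  obtain ⟨c, hclen, hcperm⟩ := exists_closed_walk_of_crossing_chords t d.adj r hxb hya
  have hac : a ∈ c.support := by
    rw [← cons_tail_support]
    exact List.mem_cons_of_mem _ (hcperm.mem_iff.2 ha)
  obtain ⟨a', q, hq, hqlen, hqperm⟩ := exists_isPath_of_support_tail_nodup
    (hcperm.nodup_iff.2 hp.1.support_nodup) (by simp [← length_eq_zero_iff, hclen]) hac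
  have hq' : q.IsLongestPath := hp.of_length_eq hq (by omega)
  exact (hqperm.trans hcperm).mem_iff.1 (hq'.mem_support_of_adj_start hab)

end Walk

section

variable {G : SimpleGraph V} [DecidableRel G.Adj]

lemma degree_induce_coe_finset (s : Finset V) (v : (s : Set V))
    [Fintype ((G.induce s).neighborSet v)] :
    (G.induce (s : Set V)).degree v = #{w ∈ s | G.Adj v w} := by
  rw [← card_neighborFinset_eq_degree, ← card_map (Function.Embedding.subtype _)]
  congr 1
  ext w
  simp [and_comm]

lemma card_filter_adj_le_degree [Fintype V] (s : Finset V) (v : V) :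
    #{w ∈ s | G.Adj v w} ≤ G.degree v := by
  rw [← card_neighborFinset_eq_degree]
  exact card_le_card fun w hw => by simpa using (mem_filter.1 hw).2

lemma sum_card_filter_adj_comm (s t : Finset V) :
    ∑ u ∈ s, #{w ∈ t | G.Adj u w} = ∑ w ∈ t, #{u ∈ s | G.Adj w u} :=
  (sum_card_bipartiteAbove_eq_sum_card_bipartiteBelow (r := G.Adj)).trans
    (sum_congr rfl fun _ _ => by simp only [bipartiteBelow, G.adj_comm])

variable [DecidableEq V]

lemma card_filter_eq_add_of_subset {s t : Finset V} (hts : t ⊆ s) (P : V → Prop)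
    [DecidablePred P] : #{w ∈ s | P w} = #{w ∈ t | P w} + #{w ∈ s \ t | P w} := by
  rw [← card_union_of_disjoint (disjoint_filter_filter disjoint_sdiff), ← filter_union,
    union_sdiff_of_subset hts]

lemma sum_card_filter_adj_eq_of_subset {s t : Finset V} (hts : t ⊆ s) :
    ∑ u ∈ s, #{w ∈ s | G.Adj u w} = ∑ u ∈ t, #{w ∈ t | G.Adj u w} +
      ∑ u ∈ s \ t, #{w ∈ s \ t | G.Adj u w} + 2 * ∑ u ∈ t, #{w ∈ s \ t | G.Adj u w} := by
  rw [← sum_sdiff hts]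
  simp_rw [card_filter_eq_add_of_subset hts, sum_add_distrib]
  rw [sum_card_filter_adj_comm (s \ t) t]
  ring

lemma exists_separated_subset_card_lt {k : ℕ} (hk : 0 < k) {s : Finset V} (hne : s.Nonempty)
    (hs : ¬ HasPathOfOrder (G.induce (s : Set V)) k)
    (hdeg : ∀ v ∈ s, k - 1 ≤ 2 * #{w ∈ s | G.Adj v w}) :
    ∃ t ⊆ s, t.Nonempty ∧ #t < k ∧ ∀ u ∈ t, ∀ w ∈ s \ t, ¬ G.Adj u w := by
  -- `t` is the vertex set of a longest path of `G[s]`.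
  set H := G.induce (s : Set V)
  have : Nonempty (s : Set V) := hne.coe_sort
  obtain ⟨x, y, p, hp⟩ := H.exists_isLongestPath
  have hlen : p.length + 1 < k := by
    by_contra! h
    exact hs (hasPathOfOrder_of_isPath hp.1 hk h)
  have hxy : p.length < H.degree x + H.degree y := by
    have := hdeg x x.2
    have := hdeg y y.2
    rw [degree_induce_coe_finset, degree_induce_coe_finset]
    omega
  refine ⟨p.support.toFinset.map (Function.Embedding.subtype _), ?_, ⟨x, by simp⟩, ?_, ?_⟩
  · intro v hv
    simp only [mem_map, List.mem_toFinset, Function.Embedding.coe_subtype] at hv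
    obtain ⟨v, -, rfl⟩ := hv
    exact v.2
  · rw [card_map]
    have := p.support.toFinset_card_le
    rw [Walk.length_support] at this
    omega
  · intro u hu w hw huw
    simp only [mem_map, List.mem_toFinset, Function.Embedding.coe_subtype, mem_sdiff] at hu hw
    obtain ⟨u, hu, rfl⟩ := hu
    exact hw.2 ⟨⟨w, hw.1⟩, hp.mem_support_of_adj hxy hu (show H.Adj u ⟨w, hw.1⟩ from huw), rfl⟩

/-- The Erdős–Gallai theorem: a graph without a path on `k` vertices has average degree at
most `k - 2`. -/
theorem sum_card_filter_adj_le_of_not_hasPathOfOrder {k : ℕ} (hk : 0 < k) (s : Finset V)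
    (hs : ¬ HasPathOfOrder (G.induce (s : Set V)) k) :
    ∑ v ∈ s, #{w ∈ s | G.Adj v w} ≤ (k - 2) * #s := by
  induction s using Finset.strongInduction with
  | H s ih =>
  rcases s.eq_empty_or_nonempty with rfl | hne
  · simp
  by_cases hlow : ∃ v ∈ s, 2 * #{w ∈ s | G.Adj v w} ≤ k - 2
  · obtain ⟨v, hv, hdeg⟩ := hlow
    have hvs : {v} ⊆ s := singleton_subset_iff.2 hv
    have hrest := ih (s \ {v}) (sdiff_ssubset hvs (singleton_nonempty v))
      fun h => hs (h.map (G.induceHomOfLE (coe_subset.2 sdiff_subset)))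
    have hcross : #{w ∈ s \ {v} | G.Adj v w} = #{w ∈ s | G.Adj v w} := by
      congr 1
      ext w
      simp only [mem_filter, mem_sdiff, mem_singleton]
      exact ⟨fun h => ⟨h.1.1, h.2⟩, fun h => ⟨⟨h.1, (G.ne_of_adj h.2).symm⟩, h.2⟩⟩
    have hcard := card_sdiff_add_card_eq_card hvs
    rw [sum_card_filter_adj_eq_of_subset hvs]
    simp only [sum_singleton, hcross, filter_singleton, G.irrefl, if_false, card_empty,
      zero_add, card_singleton] at hcard ⊢
    calc ∑ u ∈ s \ {v}, #{w ∈ s \ {v} | G.Adj u w} + 2 * #{w ∈ s | G.Adj v w}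
        ≤ (k - 2) * #(s \ {v}) + (k - 2) := by omega
      _ = (k - 2) * #s := by rw [← hcard]; ring
  · push Not at hlow
    obtain ⟨t, hts, htne, htk, hsep⟩ :=
      exists_separated_subset_card_lt hk hne hs fun v hv => by have := hlow v hv; omega
    have hrest := ih (s \ t) (sdiff_ssubset hts htne)
      fun h => hs (h.map (G.induceHomOfLE (coe_subset.2 sdiff_subset)))
    have hcross : ∑ u ∈ t, #{w ∈ s \ t | G.Adj u w} = 0 :=
      sum_eq_zero fun u hu => card_eq_zero.2 (filter_eq_empty_iff.2 (hsep u hu))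
    have hin : ∀ u ∈ t, #{w ∈ t | G.Adj u w} ≤ k - 2 := fun u hu => by
      have hsub : {w ∈ t | G.Adj u w} ⊆ t.erase u :=
        fun w hw => by simpa using ⟨(G.ne_of_adj (mem_filter.1 hw).2).symm, (mem_filter.1 hw).1⟩
      have := card_le_card hsub
      rw [card_erase_of_mem hu] at this
      omega
    have hsum := sum_le_card_nsmul t _ _ hin
    have hcard := card_sdiff_add_card_eq_card hts
    rw [smul_eq_mul] at hsum
    rw [sum_card_filter_adj_eq_of_subset hts, hcross, ← hcard]
    nlinarith

lemma IsRegularOfDegree.mul_card_le [Fintype V] {d : ℕ} (hreg : G.IsRegularOfDegree d)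
    (s : Finset V) : d * #s ≤ ∑ v ∈ s, #{w ∈ s | G.Adj v w} + d * #sᶜ := by
  have hsplit : ∀ v, #{w ∈ s | G.Adj v w} + #{w ∈ sᶜ | G.Adj v w} = d := fun v => by
    rw [← hreg v, ← card_neighborFinset_eq_degree, neighborFinset_eq_filter,
      card_filter_eq_add_of_subset (subset_univ s), ← compl_eq_univ_sdiff]
  calc d * #s = ∑ v ∈ s, (#{w ∈ s | G.Adj v w} + #{w ∈ sᶜ | G.Adj v w}) := by
        rw [sum_congr rfl fun v _ => hsplit v, sum_const, smul_eq_mul, mul_comm]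
    _ = ∑ v ∈ s, #{w ∈ s | G.Adj v w} + ∑ w ∈ sᶜ, #{u ∈ s | G.Adj w u} := by
        rw [sum_add_distrib, sum_card_filter_adj_comm s sᶜ]
    _ ≤ ∑ v ∈ s, #{w ∈ s | G.Adj v w} + ∑ w ∈ sᶜ, d := by
        gcongr with w
        exact (card_filter_adj_le_degree s w).trans_eq (hreg w)
    _ = ∑ v ∈ s, #{w ∈ s | G.Adj v w} + d * #sᶜ := by rw [sum_const, smul_eq_mul, mul_comm]

end

end SimpleGraph

/-- Brešar et al.: if `G` is `d`-regular and `k ≥ 2` with `d ≥ k - 1`, then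
`ψ_k(G) ≥ ((d - k + 2)/(2d - k + 2))·|V|`. -/
theorem stmt_2 {V : Type*} [Fintype V] (G : SimpleGraph V) [DecidableRel G.Adj]
    (d k : ℕ) (hk : 2 ≤ k) (hd : k - 1 ≤ d) (hreg : G.IsRegularOfDegree d) :
    (d + 2 - k) * Fintype.card V ≤ (2 * d + 2 - k) * psi G k := by
  classical
  obtain ⟨F, hF, hFcard⟩ : psi G k ∈ {n | ∃ F : Finset V, IsPathVertexCover G k F ∧ #F = n} :=
    Nat.sInf_mem ⟨_, univ, by rintro ⟨⟨u, hu⟩, -⟩; simp at hu, rfl⟩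
  have hpath : ∑ v ∈ Fᶜ, #{w ∈ Fᶜ | G.Adj v w} ≤ (k - 2) * #Fᶜ :=
    sum_card_filter_adj_le_of_not_hasPathOfOrder (by omega) Fᶜ (by rwa [coe_compl])
  have hdeg := hreg.mul_card_le Fᶜ
  rw [compl_compl] at hdeg
  rw [← hFcard, ← F.card_compl_add_card]
  obtain ⟨j, rfl⟩ : ∃ j, k = j + 2 := ⟨k - 2, by omega⟩
  obtain ⟨m, rfl⟩ : ∃ m, d = j + m := ⟨d - j, by omega⟩
  rw [show j + m + 2 - (j + 2) = m by omega, show 2 * (j + m) + 2 - (j + 2) = j + 2 * m by omega]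
  simp only [Nat.add_sub_cancel] at hpath
  nlinarith
end

section
/- Let G = (V, E) be a d-regular finite simple graph with d ≥ 3 and let F be any 4-path vertex cover of G. Let f denote the total number of vertices lying in connected components of the induced subgraph G[V∖F] that are triangles (3-cycles). Then |F| ≥ ((d − 1)/(2d))·|V| − f/d². In particular, ψ_4(G) ≥ ((d − 1)/(2d))·|V| − f*/d², where f* is the number of vertices on triangle components of G[V∖F*] for an optimal 4-path vertex cover F*. -/
open SimpleGraph

/-- `v` lies on a connected component of the subgraph of `G` induced on `S`
that is a triangle: `v` together with two further vertices of `S` forms a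
triangle, and no other vertex of `S` is adjacent to any of the three. -/
def OnTriangleComponent {V : Type*} (G : SimpleGraph V) (S : Set V) (v : V) : Prop :=
  v ∈ S ∧ ∃ a b, a ∈ S ∧ b ∈ S ∧ v ≠ a ∧ v ≠ b ∧ a ≠ b ∧
    G.Adj v a ∧ G.Adj v b ∧ G.Adj a b ∧
    ∀ w ∈ S, w ∉ ({v, a, b} : Set V) → ¬G.Adj w v ∧ ¬G.Adj w a ∧ ¬G.Adj w b

lemma otc_shift {V : Type*} {G : SimpleGraph V} {S : Set V} {v a b : V}
    (hv : v ∈ S) (ha : a ∈ S) (hb : b ∈ S) (hva : v ≠ a) (hvb : v ≠ b) (hab : a ≠ b)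
    (h1 : G.Adj v a) (h2 : G.Adj v b) (h3 : G.Adj a b)
    (h4 : ∀ w ∈ S, w ∉ ({v, a, b} : Set V) → ¬G.Adj w v ∧ ¬G.Adj w a ∧ ¬G.Adj w b) :
    OnTriangleComponent G S a := by
  refine ⟨ha, v, b, hv, hb, hva.symm, hab, hvb, h1.symm, h3, h2, ?_⟩
  intro w hw hw'
  have hw'' : w ∉ ({v, a, b} : Set V) := by
    simp only [Set.mem_insert_iff, Set.mem_singleton_iff] at hw' ⊢
    tauto
  have := h4 w hw hw''
  tauto


lemma aux_arith (d a b c l Tc Fc Uc U'c n sU : ℕ) (hd : 3 ≤ d)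
    (hA : d * Uc ≤ d * Fc + sU) (hs : sU = a + b + 2 * Tc)
    (h1 : a ≤ l) (h2 : b ≤ l) (h3 : a ≤ d * c)
    (h4 : c + l = U'c) (h5 : U'c + Tc = Uc) (h6 : Uc + Fc = n) :
    ((d : ℝ) - 1) / (2 * d) * n - (Tc : ℝ) / d ^ 2 ≤ Fc := by
  have hdR : (3:ℝ) ≤ (d:ℝ) := by exact_mod_cast hd
  have rA : (d:ℝ) * Uc ≤ (d:ℝ) * Fc + (sU:ℝ) := by exact_mod_cast hA
  have rs : (sU:ℝ) = a + b + 2 * Tc := by exact_mod_cast hs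
  have r1 : (a:ℝ) ≤ l := by exact_mod_cast h1
  have r2 : (b:ℝ) ≤ l := by exact_mod_cast h2
  have r3 : (a:ℝ) ≤ (d:ℝ) * c := by exact_mod_cast h3
  have r4 : (c:ℝ) + l = U'c := by exact_mod_cast h4
  have r5 : (U'c:ℝ) + Tc = Uc := by exact_mod_cast h5
  have r6 : (Uc:ℝ) + Fc = n := by exact_mod_cast h6
  -- star bound
  have rstar : ((d:ℝ) + 1) * ((a:ℝ) + b) ≤ 2 * d * ((n:ℝ) - Fc - Tc) := by
    have g1 : ((d:ℝ) - 1) * a ≤ ((d:ℝ) - 1) * l :=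
      mul_le_mul_of_nonneg_left r1 (by linarith)
    have g2 : ((d:ℝ) + 1) * b ≤ ((d:ℝ) + 1) * l :=
      mul_le_mul_of_nonneg_left r2 (by linarith)
    have g3 : (c:ℝ) + l = (n:ℝ) - Fc - Tc := by linarith
    have g4 : 2 * (d:ℝ) * ((c:ℝ) + l) = 2 * d * ((n:ℝ) - Fc - Tc) := by rw [g3]
    linarith [g1, g2, r3, g4]
  have key : (d:ℝ) * ((d:ℝ) - 1) * n ≤ 2 * (d:ℝ) ^ 2 * Fc + 2 * Tc := by
    have hUc : (Uc:ℝ) = (n:ℝ) - Fc := by linarith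
    have rA' : (d:ℝ) * ((n:ℝ) - Fc) ≤ (d:ℝ) * Fc + ((a:ℝ) + b + 2 * Tc) := by
      rw [← hUc, ← rs]; exact rA
    have q1 : (d:ℝ) * n - 2 * d * Fc - 2 * Tc ≤ (a:ℝ) + b := by nlinarith [rA']
    have q3 : ((d:ℝ) + 1) * ((d:ℝ) * n - 2 * d * Fc - 2 * Tc)
        ≤ ((d:ℝ) + 1) * ((a:ℝ) + b) :=
      mul_le_mul_of_nonneg_left q1 (by linarith)
    linarith [q3, rstar]
  have hDpos : (0:ℝ) < (d:ℝ) := by linarith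
  have heq : ((d:ℝ) - 1) / (2 * d) * n - (Tc : ℝ) / d ^ 2
      = ((d:ℝ) * ((d:ℝ) - 1) * n - 2 * Tc) / (2 * (d:ℝ) ^ 2) := by
    field_simp
  rw [heq, div_le_iff₀ (by positivity)]
  nlinarith [key]

/-- If `G` is `d`-regular with `d ≥ 3` and `F` is a `4`-path vertex cover,
then `|F| ≥ ((d-1)/(2d))·|V| - f/d²`, where `f` is the number of vertices on
triangle components of `G[V ∖ F]`.  (Applied to an optimal cover `F*`, this
gives `ψ₄(G) ≥ ((d-1)/(2d))·|V| - f*/d²`.) -/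
theorem stmt_5 {V : Type*} [Fintype V] (G : SimpleGraph V) [DecidableRel G.Adj]
    (d : ℕ) (hd : 3 ≤ d) (hreg : G.IsRegularOfDegree d)
    (F : Finset V) (hF : IsPathVertexCover G 4 F)
    (f : ℕ) (hf : f = Set.ncard {v | OnTriangleComponent G ((↑F : Set V)ᶜ) v}) :
    ((d : ℝ) - 1) / (2 * d) * Fintype.card V - (f : ℝ) / d ^ 2 ≤ F.card := by
  classical
  set S : Set V := ((↑F : Set V)ᶜ) with hS
  set U : Finset V := Fᶜ with hUdef
  have hmemU : ∀ v : V, v ∈ S ↔ v ∈ U := by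
    intro v; simp [hS, hUdef]
  set degU : V → ℕ := fun u => (G.neighborFinset u ∩ U).card with hdegUdef
  -- P4-free consequence
  have hP4 : ∀ u v x y : V, u ∈ U → v ∈ U → x ∈ U → y ∈ U →
      G.Adj u v → G.Adj u x → G.Adj v y → x ≠ v → y ≠ u → x = y := by
    intro u v x y hu hv hx hy huv hux hvy hxv hyu
    by_contra hxy
    apply hF
    have hu' : u ∈ S := (hmemU u).2 hu
    have hv' : v ∈ S := (hmemU v).2 hv
    have hx' : x ∈ S := (hmemU x).2 hx
    have hy' : y ∈ S := (hmemU y).2 hy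
    have e1 : (G.induce S).Adj ⟨x, hx'⟩ ⟨u, hu'⟩ := hux.symm
    have e2 : (G.induce S).Adj ⟨u, hu'⟩ ⟨v, hv'⟩ := huv
    have e3 : (G.induce S).Adj ⟨v, hv'⟩ ⟨y, hy'⟩ := hvy
    refine ⟨⟨x, hx'⟩, ⟨y, hy'⟩, Walk.cons e1 (Walk.cons e2 (Walk.cons e3 Walk.nil)), ?_, rfl⟩
    rw [Walk.isPath_def]
    simp only [Walk.support_cons, Walk.support_nil]
    refine List.nodup_cons.2 ⟨?_, List.nodup_cons.2 ⟨?_, List.nodup_cons.2 ⟨?_, List.nodup_singleton _⟩⟩⟩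
    · simp only [List.mem_cons, List.not_mem_nil, or_false, Subtype.mk.injEq]
      push_neg
      exact ⟨hux.ne', hxv, hxy⟩
    · simp only [List.mem_cons, List.not_mem_nil, or_false, Subtype.mk.injEq]
      push_neg
      exact ⟨huv.ne, hyu.symm⟩
    · simp only [List.mem_cons, List.not_mem_nil, or_false, Subtype.mk.injEq]
      push_neg
      exact hvy.ne
  -- basic degree facts
  have hdeg_le : ∀ u : V, degU u ≤ d := by
    intro u
    calc degU u ≤ (G.neighborFinset u).card := Finset.card_le_card Finset.inter_subset_left
      _ = d := hreg u
  have hdeg_split : ∀ u : V, degU u + (G.neighborFinset u ∩ F).card = d := by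
    intro u
    have hdisj : Disjoint (G.neighborFinset u ∩ U) (G.neighborFinset u ∩ F) := by
      refine Finset.disjoint_left.2 ?_
      intro x hx hx'
      have h1 : x ∈ U := (Finset.mem_inter.1 hx).2
      have h2 : x ∈ F := (Finset.mem_inter.1 hx').2
      rw [hUdef, Finset.mem_compl] at h1
      exact h1 h2
    have : (G.neighborFinset u ∩ U) ∪ (G.neighborFinset u ∩ F) = G.neighborFinset u := by
      rw [← Finset.inter_union_distrib_left]
      have huniv : U ∪ F = Finset.univ := by
        ext x; by_cases hx : x ∈ F <;> simp [hUdef, hx]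
      rw [huniv, Finset.inter_univ]
    rw [hdegUdef]
    simp only
    rw [← Finset.card_union_of_disjoint hdisj, this]
    exact hreg u
  -- double counting: edges between U and F
  have hA : d * U.card ≤ d * F.card + ∑ u ∈ U, degU u := by
    have h1 : ∀ u : V, (G.neighborFinset u ∩ F).card = ∑ v ∈ F, if G.Adj u v then 1 else 0 := by
      intro u
      rw [← Finset.card_filter]
      congr 1
      ext x
      simp [Finset.mem_inter, mem_neighborFinset, and_comm]
    have h2 : ∀ v : V, (G.neighborFinset v ∩ U).card = ∑ u ∈ U, if G.Adj u v then 1 else 0 := by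
      intro v
      rw [← Finset.card_filter]
      congr 1
      ext x
      simp only [Finset.mem_inter, mem_neighborFinset, Finset.mem_filter]
      rw [G.adj_comm]
      tauto
    have hdc : ∑ u ∈ U, (G.neighborFinset u ∩ F).card
        = ∑ v ∈ F, (G.neighborFinset v ∩ U).card := by
      simp_rw [h1, h2]
      exact Finset.sum_comm
    have hF_le : ∑ v ∈ F, (G.neighborFinset v ∩ U).card ≤ d * F.card := by
      calc ∑ v ∈ F, (G.neighborFinset v ∩ U).card ≤ ∑ _v ∈ F, d := by
            refine Finset.sum_le_sum ?_
            intro v _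
            calc (G.neighborFinset v ∩ U).card ≤ (G.neighborFinset v).card :=
                  Finset.card_le_card Finset.inter_subset_left
              _ = d := hreg v
        _ = d * F.card := by rw [Finset.sum_const, smul_eq_mul, mul_comm]
    have : d * U.card = ∑ u ∈ U, degU u + ∑ u ∈ U, (G.neighborFinset u ∩ F).card := by
      rw [← Finset.sum_add_distrib]
      calc d * U.card = ∑ _u ∈ U, d := by rw [Finset.sum_const, smul_eq_mul, mul_comm]
        _ = _ := by
            refine Finset.sum_congr rfl ?_
            intro u _
            exact (hdeg_split u).symm
    omega

  -- triangle vertices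
  set T : Finset V := U.filter (fun v => OnTriangleComponent G S v) with hTdef
  have hTU : T ⊆ U := Finset.filter_subset _ _
  have hfT : f = T.card := by
    rw [hf]
    have hset : {v | OnTriangleComponent G S v} = (↑T : Set V) := by
      ext v
      simp only [Set.mem_setOf_eq, hTdef, Finset.coe_filter]
      constructor
      · intro h; exact ⟨(hmemU v).1 h.1, h⟩
      · intro h; exact h.2
    rw [hset, Set.ncard_coe_finset]
  -- every triangle vertex has degree 2 in U
  have hdegT : ∀ u ∈ T, degU u = 2 := by
    intro u hu
    rw [hTdef, Finset.mem_filter] at hu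
    obtain ⟨huU, huS, a, b, ha, hb, hua, hub, hab, hadja, hadjb, hadjab, hmax⟩ := hu
    have hNU : G.neighborFinset u ∩ U = {a, b} := by
      ext w
      simp only [Finset.mem_inter, mem_neighborFinset, Finset.mem_insert, Finset.mem_singleton]
      constructor
      · rintro ⟨hadj, hwU⟩
        by_contra hcon
        push_neg at hcon
        have hwS : w ∈ S := (hmemU w).2 hwU
        have hwne : w ∉ ({u, a, b} : Set V) := by
          simp only [Set.mem_insert_iff, Set.mem_singleton_iff]
          push_neg
          exact ⟨hadj.ne', hcon.1, hcon.2⟩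
        exact absurd hadj.symm (hmax w hwS hwne).1
      · rintro (rfl | rfl)
        · exact ⟨hadja, (hmemU w).1 ha⟩
        · exact ⟨hadjb, (hmemU w).1 hb⟩
    rw [hdegUdef]
    simp only
    rw [hNU, Finset.card_insert_of_notMem (by simp [hab]), Finset.card_singleton]
  -- a U-neighbour of a triangle vertex is a triangle vertex
  have hTclosed : ∀ u ∈ U, ∀ t ∈ T, G.Adj u t → u ∈ T := by
    intro u hu t ht hadj
    rw [hTdef, Finset.mem_filter] at ht ⊢
    refine ⟨hu, ?_⟩
    obtain ⟨htU, htS, a, b, ha, hb, hta, htb, hab, h1, h2, h3, hmax⟩ := ht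
    have huS : u ∈ S := (hmemU u).2 hu
    by_cases hmem : u ∈ ({t, a, b} : Set V)
    · simp only [Set.mem_insert_iff, Set.mem_singleton_iff] at hmem
      rcases hmem with rfl | rfl | rfl
      · exact ⟨htS, a, b, ha, hb, hta, htb, hab, h1, h2, h3, hmax⟩
      · exact otc_shift htS ha hb hta htb hab h1 h2 h3 hmax
      · refine otc_shift htS hb ha htb hta hab.symm h2 h1 h3.symm ?_
        intro w hw hw'
        have hw'' : w ∉ ({t, a, u} : Set V) := by
          simp only [Set.mem_insert_iff, Set.mem_singleton_iff] at hw' ⊢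
          tauto
        have := hmax w hw hw''
        tauto
    · exact absurd hadj (hmax u huS hmem).1
  -- center lemma: an edge of U with both degrees ≥ 2 lies in a triangle component
  have hcenter : ∀ u ∈ U, ∀ v ∈ U, G.Adj u v → 2 ≤ degU u → 2 ≤ degU v → u ∈ T := by
    intro u hu v hv huv hdu hdv
    simp only [hdegUdef] at hdu hdv
    obtain ⟨x, hx, hxv⟩ : ∃ x ∈ G.neighborFinset u ∩ U, x ≠ v := by
      by_contra hcon
      push_neg at hcon
      have hsub : G.neighborFinset u ∩ U ⊆ {v} :=
        fun x hx => Finset.mem_singleton.2 (hcon x hx)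
      have := Finset.card_le_card hsub
      rw [Finset.card_singleton] at this
      omega
    obtain ⟨y, hy, hyu⟩ : ∃ y ∈ G.neighborFinset v ∩ U, y ≠ u := by
      by_contra hcon
      push_neg at hcon
      have hsub : G.neighborFinset v ∩ U ⊆ {u} :=
        fun y hy => Finset.mem_singleton.2 (hcon y hy)
      have := Finset.card_le_card hsub
      rw [Finset.card_singleton] at this
      omega
    have hxU : x ∈ U := (Finset.mem_inter.1 hx).2
    have hadjux : G.Adj u x := (mem_neighborFinset _ _ _).1 (Finset.mem_inter.1 hx).1
    have hyU : y ∈ U := (Finset.mem_inter.1 hy).2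
    have hadjvy : G.Adj v y := (mem_neighborFinset _ _ _).1 (Finset.mem_inter.1 hy).1
    have hxy : x = y := hP4 u v x y hu hv hxU hyU huv hadjux hadjvy hxv hyu
    subst hxy
    rw [hTdef, Finset.mem_filter]
    refine ⟨hu, (hmemU u).2 hu, v, x, (hmemU v).2 hv, (hmemU x).2 hxU, huv.ne, hadjux.ne,
      hxv.symm, huv, hadjux, hadjvy, ?_⟩
    intro z hz hz'
    have hzU : z ∈ U := (hmemU z).1 hz
    simp only [Set.mem_insert_iff, Set.mem_singleton_iff] at hz'
    push_neg at hz'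
    obtain ⟨hzu, hzv, hzx⟩ := hz'
    refine ⟨?_, ?_, ?_⟩
    · intro h
      exact hzx (hP4 u v z x hu hv hzU hxU huv h.symm hadjvy hzv hadjux.ne')
    · intro h
      exact hzx (hP4 v u z x hv hu hzU hxU huv.symm h.symm hadjux hzu hadjvy.ne')
    · intro h
      exact hzv (hP4 x u z v hxU hu hzU hv hadjux.symm h.symm huv hzu hxv.symm)
  -- the star part
  set U' : Finset V := U \ T with hU'def
  have hU'sub : U' ⊆ U := Finset.sdiff_subset
  have hNU' : ∀ u ∈ U', G.neighborFinset u ∩ U ⊆ U' := by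
    intro u hu w hw
    have hwU : w ∈ U := (Finset.mem_inter.1 hw).2
    have hadj : G.Adj u w := (mem_neighborFinset _ _ _).1 (Finset.mem_inter.1 hw).1
    rw [hU'def, Finset.mem_sdiff]
    refine ⟨hwU, fun hwT => ?_⟩
    have huT : u ∈ T := hTclosed u (hU'sub hu) w hwT hadj
    rw [hU'def, Finset.mem_sdiff] at hu
    exact hu.2 huT
  set C : Finset V := U'.filter (fun u => 2 ≤ degU u) with hCdef
  set L : Finset V := U'.filter (fun u => ¬ 2 ≤ degU u) with hLdef
  have hCLcard : C.card + L.card = U'.card :=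
    Finset.card_filter_add_card_filter_not _
  have hCU' : C ⊆ U' := Finset.filter_subset _ _
  have hLU' : L ⊆ U' := Finset.filter_subset _ _
  have hNC : ∀ c ∈ C, G.neighborFinset c ∩ U ⊆ L := by
    intro c hc w hw
    have hw' : w ∈ U' := hNU' c (hCU' hc) hw
    have hadj : G.Adj c w := (mem_neighborFinset _ _ _).1 (Finset.mem_inter.1 hw).1
    rw [hLdef, Finset.mem_filter]
    refine ⟨hw', fun h2 => ?_⟩
    have hcT : c ∈ T := hcenter c (hU'sub (hCU' hc)) w (hU'sub hw') hadj
      ((Finset.mem_filter.1 hc).2) h2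
    have hcU' := hCU' hc
    rw [hU'def, Finset.mem_sdiff] at hcU'
    exact hcU'.2 hcT
  have hSC : ∑ c ∈ C, degU c ≤ L.card := by
    have h1 : ∀ c ∈ C, degU c = ∑ l ∈ L, if G.Adj c l then 1 else 0 := by
      intro c hc
      have heq : G.neighborFinset c ∩ U = L.filter (fun l => G.Adj c l) := by
        ext w
        constructor
        · intro hw
          rw [Finset.mem_filter]
          exact ⟨hNC c hc hw, (mem_neighborFinset _ _ _).1 (Finset.mem_inter.1 hw).1⟩
        · intro hw
          rw [Finset.mem_filter] at hw
          exact Finset.mem_inter.2 ⟨(mem_neighborFinset _ _ _).2 hw.2,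
            hU'sub (hLU' hw.1)⟩
      simp only [hdegUdef]
      rw [heq, Finset.card_filter]
    have h2 : ∑ c ∈ C, degU c = ∑ l ∈ L, ∑ c ∈ C, if G.Adj c l then 1 else 0 := by
      rw [Finset.sum_congr rfl h1, Finset.sum_comm]
    rw [h2]
    have h3 : ∀ l ∈ L, (∑ c ∈ C, if G.Adj c l then 1 else 0) ≤ 1 := by
      intro l hl
      have hle : (∑ c ∈ C, if G.Adj c l then 1 else 0) ≤ degU l := by
        simp only [hdegUdef]
        rw [← Finset.card_filter]
        apply Finset.card_le_card
        intro c hc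
        rw [Finset.mem_filter] at hc
        exact Finset.mem_inter.2 ⟨(mem_neighborFinset _ _ _).2 hc.2.symm,
          hU'sub (hCU' hc.1)⟩
      have hl2 : ¬ 2 ≤ degU l := (Finset.mem_filter.1 hl).2
      omega
    calc ∑ l ∈ L, ∑ c ∈ C, (if G.Adj c l then 1 else 0) ≤ ∑ _l ∈ L, 1 :=
          Finset.sum_le_sum h3
      _ = L.card := by simp
  have hSL : ∑ l ∈ L, degU l ≤ L.card := by
    calc ∑ l ∈ L, degU l ≤ ∑ _l ∈ L, 1 := by
          refine Finset.sum_le_sum ?_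
          intro l hl
          have hl2 : ¬ 2 ≤ degU l := (Finset.mem_filter.1 hl).2
          omega
      _ = L.card := by simp
  have hSCd : ∑ c ∈ C, degU c ≤ d * C.card := by
    calc ∑ c ∈ C, degU c ≤ ∑ _c ∈ C, d := Finset.sum_le_sum (fun c _ => hdeg_le c)
      _ = d * C.card := by rw [Finset.sum_const, smul_eq_mul, mul_comm]
  -- sum decompositions and cardinalities
  have hsumT : ∑ t ∈ T, degU t = 2 * T.card := by
    rw [Finset.sum_congr rfl hdegT, Finset.sum_const, smul_eq_mul, mul_comm]
  have hsumU' : ∑ u ∈ U', degU u = ∑ c ∈ C, degU c + ∑ l ∈ L, degU l := by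
    rw [hCdef, hLdef]
    exact (Finset.sum_filter_add_sum_filter_not _ _ _).symm
  have hsum_split : ∑ u ∈ U, degU u
      = ∑ c ∈ C, degU c + ∑ l ∈ L, degU l + 2 * T.card := by
    have := Finset.sum_sdiff (f := degU) hTU
    rw [← hU'def] at this
    omega
  have hU'card : U'.card + T.card = U.card := by
    have h1 : T.card ≤ U.card := Finset.card_le_card hTU
    rw [hU'def, Finset.card_sdiff_of_subset hTU]
    omega
  have hUFcard : U.card + F.card = Fintype.card V := by
    rw [hUdef, Finset.card_compl]
    have := F.card_le_univ
    omega
  rw [hfT]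
  exact aux_arith d (∑ c ∈ C, degU c) (∑ l ∈ L, degU l) C.card L.card T.card F.card
    U.card U'.card (Fintype.card V) (∑ u ∈ U, degU u) hd hA hsum_split hSC hSL hSCd
    hCLcard hU'card hUFcard
end

section
/- If G = (V, E) is a d-regular finite simple graph with d ≥ 3 that contains no triangle (in particular, if G is d-regular bipartite), then ψ_4(G) ≥ ((d − 1)/(2d))·|V|. -/
open SimpleGraph

open Finset in
lemma cover_card_bound {V : Type*} [Fintype V] [DecidableEq V] (G : SimpleGraph V)
    [DecidableRel G.Adj] (d : ℕ) (hd : 3 ≤ d) (hreg : G.IsRegularOfDegree d)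
    (htf : G.CliqueFree 3) (F : Finset V) (hF : IsPathVertexCover G 4 F) :
    (d - 1) * Fintype.card V ≤ 2 * d * F.card := by
  set S : Finset V := Fᶜ with hSdef
  have hmemS : ∀ v, v ∈ S ↔ v ∉ F := fun v => Finset.mem_compl
  set N : V → Finset V := fun v => (G.neighborFinset v).filter (· ∈ S) with hNdef
  have hmemN : ∀ u v, v ∈ N u ↔ G.Adj u v ∧ v ∈ S := by
    intro u v; simp [hNdef, mem_neighborFinset]
  have hNcard : ∀ v, (N v).card ≤ d := by
    intro v
    calc (N v).card ≤ (G.neighborFinset v).card := card_le_card (filter_subset _ _)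
      _ = d := hreg v
  -- key structural property: every edge of the induced graph has an endpoint of induced degree 1
  have key : ∀ u v, u ∈ S → v ∈ S → G.Adj u v → (N u).card = 1 ∨ (N v).card = 1 := by
    intro u v hu hv huv
    by_contra hcon
    push_neg at hcon
    obtain ⟨h1, h2⟩ := hcon
    have hvNu : v ∈ N u := (hmemN u v).2 ⟨huv, hv⟩
    have huNv : u ∈ N v := (hmemN v u).2 ⟨huv.symm, hu⟩
    have h1' : 1 < (N u).card := by
      have : 0 < (N u).card := card_pos.mpr ⟨v, hvNu⟩
      omega
    have h2' : 1 < (N v).card := by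
      have : 0 < (N v).card := card_pos.mpr ⟨u, huNv⟩
      omega
    obtain ⟨u', hu'mem, hu'ne⟩ := Finset.exists_mem_ne h1' v
    obtain ⟨v', hv'mem, hv'ne⟩ := Finset.exists_mem_ne h2' u
    have hadj_uu' : G.Adj u u' := ((hmemN u u').1 hu'mem).1
    have hadj_vv' : G.Adj v v' := ((hmemN v v').1 hv'mem).1
    have hu'S : u' ∈ S := ((hmemN u u').1 hu'mem).2
    have hv'S : v' ∈ S := ((hmemN v v').1 hv'mem).2
    have hne : u' ≠ v' := by
      intro h
      apply htf {u, v, v'}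
      rw [is3Clique_triple_iff]
      exact ⟨huv, h ▸ hadj_uu', hadj_vv'⟩
    -- build a path of order 4 in the induced graph
    apply hF
    have hmem' : ∀ w, w ∈ S → w ∈ ((↑F : Set V)ᶜ : Set V) := by
      intro w hw
      simpa using (hmemS w).1 hw
    have h₁ : (G.induce ((↑F : Set V)ᶜ)).Adj ⟨u', hmem' u' hu'S⟩ ⟨u, hmem' u hu⟩ := by
      simp only [comap_adj, Function.Embedding.coe_subtype]
      exact hadj_uu'.symm
    have h₂ : (G.induce ((↑F : Set V)ᶜ)).Adj ⟨u, hmem' u hu⟩ ⟨v, hmem' v hv⟩ := by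
      simp only [comap_adj, Function.Embedding.coe_subtype]
      exact huv
    have h₃ : (G.induce ((↑F : Set V)ᶜ)).Adj ⟨v, hmem' v hv⟩ ⟨v', hmem' v' hv'S⟩ := by
      simp only [comap_adj, Function.Embedding.coe_subtype]
      exact hadj_vv'
    refine ⟨⟨u', hmem' u' hu'S⟩, ⟨v', hmem' v' hv'S⟩,
      Walk.cons h₁ (Walk.cons h₂ (Walk.cons h₃ Walk.nil)), ?_, by simp⟩
    rw [SimpleGraph.Walk.isPath_def]
    simp only [Walk.support_cons, Walk.support_nil, List.nodup_cons, List.mem_cons,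
      List.mem_singleton, List.not_mem_nil, or_false, List.nodup_nil, and_true,
      Subtype.mk.injEq, not_or]
    refine ⟨⟨hadj_uu'.ne', hu'ne, hne⟩, ⟨huv.ne, fun h => hv'ne h.symm⟩, hadj_vv'.ne, not_false⟩
  -- counting
  set Cs : Finset V := S.filter (fun v => 2 ≤ (N v).card) with hCs
  set Ls : Finset V := S.filter (fun v => (N v).card = 1) with hLs
  have hCsS : Cs ⊆ S := filter_subset _ _
  -- for a center c and u ∈ N c, u is a leaf
  have hleaf : ∀ c ∈ Cs, ∀ u ∈ N c, u ∈ Ls := by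
    intro c hc u hu
    obtain ⟨hcS, hc2⟩ := mem_filter.mp hc
    obtain ⟨hadj, huS⟩ := (hmemN c u).1 hu
    rcases key c u hcS huS hadj with h | h
    · omega
    · exact mem_filter.mpr ⟨huS, h⟩
  -- neighborhoods of distinct centers are disjoint
  have hdisj : ∀ c ∈ Cs, ∀ c' ∈ Cs, c ≠ c' → Disjoint (N c) (N c') := by
    intro c hc c' hc' hne
    rw [Finset.disjoint_left]
    intro u hu hu'
    have h1 : u ∈ Ls := hleaf c hc u hu
    have hcard1 : (N u).card = 1 := (mem_filter.mp h1).2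
    obtain ⟨a, ha⟩ := card_eq_one.mp hcard1
    have hcNu : c ∈ N u := (hmemN u c).2 ⟨((hmemN c u).1 hu).1.symm, hCsS hc⟩
    have hc'Nu : c' ∈ N u := (hmemN u c').2 ⟨((hmemN c' u).1 hu').1.symm, hCsS hc'⟩
    rw [ha, mem_singleton] at hcNu hc'Nu
    exact hne (hcNu.trans hc'Nu.symm)
  have hLC : ∑ c ∈ Cs, (N c).card ≤ Ls.card := by
    rw [← Finset.card_biUnion hdisj]
    apply card_le_card
    intro u hu
    obtain ⟨c, hc, huc⟩ := mem_biUnion.mp hu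
    exact hleaf c hc u huc
  have hCL : Cs.card + Ls.card ≤ S.card := by
    rw [← card_union_of_disjoint]
    · apply card_le_card
      exact union_subset (filter_subset _ _) (filter_subset _ _)
    · rw [Finset.disjoint_left]
      intro a ha ha'
      have := (mem_filter.mp ha).2
      have := (mem_filter.mp ha').2
      omega
  -- the sum of induced degrees splits
  have hsplit : ∑ v ∈ S, (N v).card = (∑ c ∈ Cs, (N c).card) + Ls.card := by
    rw [← Finset.sum_filter_add_sum_filter_not S (fun v => 2 ≤ (N v).card) (fun v => (N v).card)]
    congr 1
    have hLeq : Ls = (S.filter (fun v => ¬ 2 ≤ (N v).card)).filter (fun v => (N v).card = 1) := by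
      ext v
      simp only [hLs, mem_filter]
      constructor
      · rintro ⟨h1, h2⟩; exact ⟨⟨h1, by omega⟩, h2⟩
      · rintro ⟨⟨h1, _⟩, h2⟩; exact ⟨h1, h2⟩
    rw [hLeq, Finset.card_filter]
    apply Finset.sum_congr rfl
    intro v hv
    have := (mem_filter.mp hv).2
    by_cases h : (N v).card = 1
    · simp [h]
    · simp only [h, if_false]
      omega
  -- degree sum identity
  have hcross : ∀ v, (N v).card + ((G.neighborFinset v).filter (fun u => ¬ u ∈ S)).card = d := by
    intro v
    rw [← hreg v]
    exact Finset.card_filter_add_card_filter_not _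
  have hswap : ∑ v ∈ S, ((G.neighborFinset v).filter (fun u => ¬ u ∈ S)).card
      ≤ d * F.card := by
    have h1 : ∀ v, (G.neighborFinset v).filter (fun u => ¬ u ∈ S) = F.filter (fun u => G.Adj v u) := by
      intro v
      ext u
      simp only [mem_filter, mem_neighborFinset, hmemS, not_not]
      tauto
    calc ∑ v ∈ S, ((G.neighborFinset v).filter (fun u => ¬ u ∈ S)).card
        = ∑ v ∈ S, ∑ u ∈ F, (if G.Adj v u then 1 else 0) := by
          refine Finset.sum_congr rfl fun v _ => ?_
          rw [h1 v, Finset.card_filter]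
      _ = ∑ u ∈ F, ∑ v ∈ S, (if G.Adj v u then 1 else 0) := Finset.sum_comm
      _ = ∑ u ∈ F, (S.filter (fun v => G.Adj v u)).card := by
          refine Finset.sum_congr rfl fun u _ => ?_
          rw [Finset.card_filter]
      _ ≤ ∑ u ∈ F, d := by
          refine Finset.sum_le_sum fun u _ => ?_
          calc (S.filter (fun v => G.Adj v u)).card
              ≤ (G.neighborFinset u).card := by
                apply card_le_card
                intro v hv
                rw [mem_neighborFinset]
                exact ((mem_filter.mp hv).2).symm
            _ = d := hreg u
      _ = d * F.card := by rw [Finset.sum_const, smul_eq_mul, mul_comm]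
  have hE : d * S.card ≤ ∑ v ∈ S, (N v).card + d * F.card := by
    have : ∑ v ∈ S, d = d * S.card := by rw [Finset.sum_const, smul_eq_mul, mul_comm]
    calc d * S.card = ∑ v ∈ S, d := this.symm
      _ = ∑ v ∈ S, ((N v).card + ((G.neighborFinset v).filter (fun u => ¬ u ∈ S)).card) := by
          refine Finset.sum_congr rfl fun v _ => (hcross v).symm
      _ = ∑ v ∈ S, (N v).card + ∑ v ∈ S, ((G.neighborFinset v).filter (fun u => ¬ u ∈ S)).card :=
          Finset.sum_add_distrib
      _ ≤ ∑ v ∈ S, (N v).card + d * F.card := Nat.add_le_add_left hswap _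
  have hCd : ∑ c ∈ Cs, (N c).card ≤ d * Cs.card := by
    calc ∑ c ∈ Cs, (N c).card ≤ ∑ c ∈ Cs, d := Finset.sum_le_sum fun c _ => hNcard c
      _ = d * Cs.card := by rw [Finset.sum_const, smul_eq_mul, mul_comm]
  have hn : S.card + F.card = Fintype.card V := by
    rw [hSdef, card_compl]
    have := card_le_univ F
    omega
  -- final arithmetic
  obtain ⟨e, rfl⟩ : ∃ e, d = e + 3 := ⟨d - 3, by omega⟩
  set a := ∑ c ∈ Cs, (N c).card
  set l := Ls.card
  set c := Cs.card
  set s := S.card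
  set m := F.card
  set n := Fintype.card V
  rw [hsplit] at hE
  -- hE : (e+3) * s ≤ a + l + (e+3) * m ;  hCd : a ≤ (e+3)*c ; hLC : a ≤ l ; hCL : c + l ≤ s
  have p1 : e * a ≤ e * l := Nat.mul_le_mul_left e hLC
  have hB : (e + 4) * (a + l) ≤ 2 * (e + 3) * s := by
    have p2 : (e + 3) * (c + l) ≤ (e + 3) * s := Nat.mul_le_mul_left _ hCL
    nlinarith [p1, hCd, hLC, p2]
  have p3 : (e + 4) * ((e + 3) * s) ≤ (e + 4) * (a + l + (e + 3) * m) :=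
    Nat.mul_le_mul_left _ hE
  have p4 : (e + 3) * ((e + 2) * s) ≤ (e + 3) * ((e + 4) * m) := by nlinarith [p3, hB]
  have p5 : (e + 2) * s ≤ (e + 4) * m := Nat.le_of_mul_le_mul_left p4 (by omega)
  have hgoal : (e + 2) * n ≤ 2 * (e + 3) * m := by nlinarith [p5, hn]
  calc (e + 3 - 1) * n = (e + 2) * n := by norm_num
    _ ≤ 2 * (e + 3) * m := hgoal

/-- If `G` is `d`-regular with `d ≥ 3` and triangle-free (e.g. bipartite),
then `ψ₄(G) ≥ ((d-1)/(2d))·|V|`. -/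
theorem stmt_6 {V : Type*} [Fintype V] (G : SimpleGraph V) [DecidableRel G.Adj]
    (d : ℕ) (hd : 3 ≤ d) (hreg : G.IsRegularOfDegree d)
    (htf : G.CliqueFree 3) :
    ((d : ℝ) - 1) / (2 * d) * Fintype.card V ≤ psi G 4 := by
  classical
  have hne : {n | ∃ F : Finset V, IsPathVertexCover G 4 F ∧ F.card = n}.Nonempty := by
    refine ⟨(Finset.univ : Finset V).card, Finset.univ, ?_, rfl⟩
    rintro ⟨u, v, w, hw⟩
    have := u.2
    simp at this
  obtain ⟨F, hF, hcard⟩ := Nat.sInf_mem hne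
  have hkey : (d - 1) * Fintype.card V ≤ 2 * d * F.card :=
    cover_card_bound G d hd hreg htf F hF
  have hpsi : psi G 4 = F.card := hcard.symm
  rw [hpsi, div_mul_eq_mul_div, div_le_iff₀ (by positivity)]
  have h2 : ((d - 1 : ℕ) : ℝ) * (Fintype.card V : ℝ) ≤ 2 * d * F.card := by
    exact_mod_cast hkey
  rw [Nat.cast_sub (by omega)] at h2
  push_cast at h2 ⊢
  linarith
end

section
/- Let G = (V, E) be a cubic finite simple graph. Let (V^1, V^2) be a partition of V such that every vertex has at most one neighbor in its own part. Let t* be the maximum cardinality of a family of pairwise vertex-disjoint, pairwise non-adjacent triangles of G, and let 𝒯 be such a family with 6|𝒯| ≥ 5·t*. Then F₁ = V ∖ V^i (where V^i is the larger of V^1, V^2) and F₂ = V minus the vertices on triangles of 𝒯 are both 4-path vertex covers of G, and min{|F₁|, |F₂|} ≤ (15/8)·ψ_4(G). -/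
open SimpleGraph

/-! If `F` is a `4`-path vertex cover of the cubic graph `G` and `S = V ∖ F`, every component
of `G[S]` is a triangle or a star with at most three leaves, so `2e(G[S]) ≤ 3|S|/2 + 3τ/2`,
where `τ ≤ t*` counts the triangle components. The `3|S| - 2e(G[S])` edges leaving `S` number
at most `3|F|`, whence `n ≤ 3ψ₄(G) + t*`. On the other side `|F₁| ≤ n/2` and
`|F₂| = n - 3|𝒯| ≤ n - 5t*/2`; the first is at most `15ψ₄(G)/8` when `5t* ≤ n`, the second
when `5t* > n`. -/

open Finset

section

variable {V : Type*}

-- `a ≠ b`, `b ≠ c` and `c ≠ d` are forced by adjacency, so only the other pairs are tested.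
def P4FreeOn (G : SimpleGraph V) (S : Set V) : Prop :=
  ∀ ⦃a b c d⦄, a ∈ S → b ∈ S → c ∈ S → d ∈ S →
    G.Adj a b → G.Adj b c → G.Adj c d → a = c ∨ a = d ∨ b = d

theorem hasPathOfOrder_four_iff {G : SimpleGraph V} :
    HasPathOfOrder G 4 ↔
      ∃ a b c d, G.Adj a b ∧ G.Adj b c ∧ G.Adj c d ∧ a ≠ c ∧ a ≠ d ∧ b ≠ d := by
  constructor
  · rintro ⟨a, d, w, hw, hlen⟩
    match w, hw, hlen with
    | .cons (v := b) hab (.cons (v := c) hbc (.cons hcd .nil)), hw, _ =>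
      simp only [Walk.isPath_def, Walk.support_cons, Walk.support_nil, List.nodup_cons,
        List.mem_cons, List.not_mem_nil, or_false, not_or] at hw
      exact ⟨a, b, c, d, hab, hbc, hcd, hw.1.2.1, hw.1.2.2, hw.2.1.2⟩
  · rintro ⟨a, b, c, d, hab, hbc, hcd, hac, had, hbd⟩
    refine ⟨a, d, .cons hab (.cons hbc (.cons hcd .nil)), ?_, rfl⟩
    simp [Walk.isPath_def, hab.ne, hbc.ne, hcd.ne, hac, had, hbd]

theorem p4FreeOn_iff {G : SimpleGraph V} {S : Set V} :
    P4FreeOn G S ↔ ¬HasPathOfOrder (G.induce S) 4 := by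
  rw [hasPathOfOrder_four_iff]
  constructor
  · rintro h ⟨a, b, c, d, hab, hbc, hcd, hac, had, hbd⟩
    rcases h a.2 b.2 c.2 d.2 hab hbc hcd with h | h | h
    exacts [hac (Subtype.ext h), had (Subtype.ext h), hbd (Subtype.ext h)]
  · intro h a b c d ha hb hc hd hab hbc hcd
    by_contra! hne
    exact h ⟨⟨a, ha⟩, ⟨b, hb⟩, ⟨c, hc⟩, ⟨d, hd⟩, hab, hbc, hcd,
      by simpa [Subtype.ext_iff] using hne⟩

theorem exists_isPathVertexCover_card_eq_psi [Fintype V] (G : SimpleGraph V) (k : ℕ) :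
    ∃ F : Finset V, IsPathVertexCover G k F ∧ F.card = psi G k := by
  have huniv : IsPathVertexCover G k univ := by
    rintro ⟨u, -, -, -, -⟩
    simpa using u.2
  exact Nat.sInf_mem (s := {n | ∃ F : Finset V, IsPathVertexCover G k F ∧ F.card = n})
    ⟨_, univ, huniv, rfl⟩

theorem isPathVertexCover_univ_sdiff_iff [Fintype V] [DecidableEq V] {G : SimpleGraph V}
    {W : Finset V} :
    IsPathVertexCover G 4 (univ \ W) ↔ P4FreeOn G W := by
  have hcompl : ((↑(univ \ W) : Set V))ᶜ = ↑W := by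
    ext
    simp
  rw [p4FreeOn_iff, IsPathVertexCover, hcompl]

section TrianglePacking

variable [DecidableEq V] {G : SimpleGraph V}

def IsTrianglePacking (G : SimpleGraph V) (T : Finset (Finset V)) : Prop :=
  (∀ s ∈ T, G.IsNClique 3 s) ∧ (∀ s ∈ T, ∀ t ∈ T, s ≠ t → Disjoint s t) ∧
    ∀ s ∈ T, ∀ t ∈ T, s ≠ t → ∀ u ∈ s, ∀ v ∈ t, ¬G.Adj u v

theorem IsTrianglePacking.card_biUnion {T : Finset (Finset V)} (hT : IsTrianglePacking G T) :
    (T.biUnion id).card = 3 * T.card := by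
  rw [Finset.card_biUnion (t := id) hT.2.1]
  exact (sum_const_nat fun s hs => (hT.1 s hs).card_eq).trans (mul_comm _ _)

theorem IsTrianglePacking.p4FreeOn {T : Finset (Finset V)} (hT : IsTrianglePacking G T) :
    P4FreeOn G ↑(T.biUnion id) := by
  have hsame : ∀ s ∈ T, ∀ t ∈ T, ∀ u ∈ s, ∀ v ∈ t, G.Adj u v → s = t :=
    fun s hs t ht u hu v hv huv => by_contra fun hst => hT.2.2 s hs t ht hst u hu v hv huv
  intro a b c d ha hb hc hd hab hbc hcd
  simp only [coe_biUnion, id, Set.mem_iUnion, mem_coe, exists_prop] at ha hb hc hd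
  obtain ⟨s, hs, has⟩ := ha
  obtain ⟨t, ht, hbt⟩ := hb
  obtain ⟨t', ht', hct⟩ := hc
  obtain ⟨t'', ht'', hdt⟩ := hd
  obtain rfl := hsame s hs t ht a has b hbt hab
  obtain rfl := hsame s hs t' ht' b hbt c hct hbc
  obtain rfl := hsame s hs t'' ht'' c hct d hdt hcd
  by_contra! hne
  have hsub : ({a, b, c, d} : Finset V) ⊆ s := by
    intro x hx
    simp only [mem_insert, mem_singleton] at hx
    rcases hx with rfl | rfl | rfl | rfl <;> assumption
  have hcard := card_le_card hsub
  rw [(hT.1 s hs).card_eq, card_insert_of_notMem (by simp [hab.ne, hne.1, hne.2.1]),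
    card_insert_of_notMem (by simp [hbc.ne, hne.2.2]), card_pair hcd.ne] at hcard
  omega

end TrianglePacking

section Degrees

variable [Fintype V] [DecidableEq V] {G : SimpleGraph V} [DecidableRel G.Adj]

theorem p4FreeOn_of_card_neighborFinset_inter_le_one {W : Finset V}
    (hW : ∀ v ∈ W, (G.neighborFinset v ∩ W).card ≤ 1) : P4FreeOn G W := by
  intro a b c _ ha hb hc _ hab hbc _
  exact .inl <| card_le_one.1 (hW b hb)
    a (mem_inter.2 ⟨(mem_neighborFinset G b a).2 hab.symm, ha⟩)
    c (mem_inter.2 ⟨(mem_neighborFinset G b c).2 hbc, hc⟩)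

theorem sum_sum_neighborFinset_inter (R Q : Finset V) (f : V → ℕ) :
    ∑ v ∈ R, ∑ u ∈ G.neighborFinset v ∩ Q, f u =
      ∑ u ∈ Q, (G.neighborFinset u ∩ R).card * f u := by
  have hfilter : ∀ v (X : Finset V), G.neighborFinset v ∩ X = X.filter (G.Adj v) := by
    intro v X
    ext
    simp [and_comm]
  simp_rw [hfilter, sum_filter]
  rw [sum_comm]
  refine sum_congr rfl fun u _ => ?_
  rw [card_eq_sum_ones, sum_mul, sum_filter]
  simp [G.adj_comm]

theorem SimpleGraph.IsRegularOfDegree.mul_card_le_sum_add {k : ℕ} (hG : G.IsRegularOfDegree k)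
    (S : Finset V) :
    k * S.card ≤ ∑ v ∈ S, (G.neighborFinset v ∩ S).card + k * Sᶜ.card := by
  have hsplit :
      ∀ v, (G.neighborFinset v ∩ S).card + (G.neighborFinset v ∩ Sᶜ).card = k := by
    intro v
    rw [← sdiff_eq_inter_compl, card_inter_add_card_sdiff, card_neighborFinset_eq_degree, hG v]
  have hcross : ∑ v ∈ S, (G.neighborFinset v ∩ Sᶜ).card ≤ k * Sᶜ.card := by
    have hswap := sum_sum_neighborFinset_inter (G := G) S Sᶜ 1
    simp only [Pi.one_apply, sum_const, smul_eq_mul, mul_one] at hswap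
    rw [hswap, mul_comm, ← smul_eq_mul, ← sum_const]
    refine sum_le_sum fun u _ => ?_
    exact (card_le_card inter_subset_left).trans (card_neighborFinset_eq_degree G u ▸ (hG u).le)
  calc k * S.card
      = ∑ v ∈ S, ((G.neighborFinset v ∩ S).card + (G.neighborFinset v ∩ Sᶜ).card) := by
        simp [hsplit, mul_comm]
    _ ≤ _ := by
        rw [sum_add_distrib]
        exact Nat.add_le_add_left hcross _

-- Charging each edge of `G[R]` to an endpoint of degree one bounds the degree sum by twice the
-- number of such vertices.
theorem two_mul_sum_card_neighborFinset_inter_le_of_adj (hdeg : ∀ v, G.degree v ≤ 3)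
    {R : Finset V}
    (hleaf : ∀ v ∈ R, ∀ u ∈ R, G.Adj v u →
      (G.neighborFinset v ∩ R).card = 1 ∨ (G.neighborFinset u ∩ R).card = 1) :
    2 * ∑ v ∈ R, (G.neighborFinset v ∩ R).card ≤ 3 * R.card := by
  set d : V → ℕ := fun v => (G.neighborFinset v ∩ R).card
  set leaf : V → ℕ := fun v => if d v = 1 then 1 else 0 with hleafdef
  have hdleaf : ∀ v, (G.neighborFinset v ∩ R).card * leaf v = leaf v := by
    intro v
    change d v * leaf v = leaf v
    by_cases h : d v = 1 <;> simp [leaf, h]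
  have hedges : ∑ v ∈ R, d v ≤ 2 * ∑ v ∈ R, leaf v := by
    calc ∑ v ∈ R, d v = ∑ v ∈ R, ∑ u ∈ G.neighborFinset v ∩ R, 1 := by simp [d]
      _ ≤ ∑ v ∈ R, ∑ u ∈ G.neighborFinset v ∩ R, (leaf u + leaf v) := by
          gcongr with v hv u hu
          rw [mem_inter, mem_neighborFinset] at hu
          rcases hleaf v hv u hu.2 hu.1 with h | h <;> simp [leaf, show d _ = 1 from h]
      _ = 2 * ∑ v ∈ R, leaf v := by
          simp_rw [sum_add_distrib, sum_sum_neighborFinset_inter, sum_const, smul_eq_mul,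
            hdleaf]
          ring
  have hvertex : ∀ v, d v + 2 * leaf v ≤ 3 := by
    intro v
    by_cases h : d v = 1
    · simp [leaf, h]
    · simp only [hleafdef, if_neg h, mul_zero, add_zero]
      exact (card_le_card inter_subset_left).trans (card_neighborFinset_eq_degree G v ▸ hdeg v)
  have hsum : ∑ v ∈ R, (d v + 2 * leaf v) ≤ 3 * R.card := by
    simpa [mul_comm] using sum_le_sum fun v (_ : v ∈ R) => hvertex v
  rw [sum_add_distrib, ← mul_sum] at hsum
  linarith

end Degrees

def closedNbrIn [Fintype V] [DecidableEq V] (G : SimpleGraph V) [DecidableRel G.Adj]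
    (S : Finset V) (v : V) : Finset V :=
  insert v (G.neighborFinset v ∩ S)

-- When `S` is `P4FreeOn`, these are exactly the vertices of `S` lying on a triangle of `G[S]`.
def triangleVertices [Fintype V] [DecidableEq V] (G : SimpleGraph V) [DecidableRel G.Adj]
    (S : Finset V) : Finset V :=
  S.filter fun v => G.IsNClique 3 (closedNbrIn G S v)

section P4Free

variable [Fintype V] [DecidableEq V] {G : SimpleGraph V} [DecidableRel G.Adj] {S : Finset V}
  {u v y : V}

theorem closedNbrIn_subset (hv : v ∈ S) : closedNbrIn G S v ⊆ S :=
  insert_subset hv inter_subset_right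

theorem mem_closedNbrIn_of_adj (hvu : G.Adj v u) (hu : u ∈ S) : u ∈ closedNbrIn G S v :=
  mem_insert_of_mem (mem_inter.2 ⟨(mem_neighborFinset G v u).2 hvu, hu⟩)

theorem card_neighborFinset_inter_of_mem_triangleVertices (hv : v ∈ triangleVertices G S) :
    (G.neighborFinset v ∩ S).card = 2 := by
  have h3 := (mem_filter.1 hv).2.card_eq
  rw [closedNbrIn, card_insert_of_notMem (by simp)] at h3
  omega

namespace P4FreeOn

variable (hS : P4FreeOn G ↑S)
include hS

theorem closedNbrIn_eq_triple {a b c : V} (ha : a ∈ S) (hb : b ∈ S) (hc : c ∈ S)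
    (hab : G.Adj a b) (hac : G.Adj a c) (hbc : G.Adj b c) :
    closedNbrIn G S a = {a, b, c} := by
  ext x
  simp only [closedNbrIn, mem_insert, mem_inter, mem_neighborFinset, mem_singleton]
  constructor
  · rintro (rfl | ⟨hax, hx⟩)
    · exact .inl rfl
    · by_contra! hne
      rcases hS hx ha hb hc hax.symm hab hbc with h | h | h
      exacts [hne.2.1 h, hne.2.2 h, hac.ne h]
  · rintro (rfl | rfl | rfl)
    exacts [.inl rfl, .inr ⟨hab, hb⟩, .inr ⟨hac, hc⟩]

theorem closedNbrIn_eq_of_isNClique {s : Finset V} (hsS : s ⊆ S) (hs : G.IsNClique 3 s)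
    (hy : y ∈ s) : closedNbrIn G S y = s := by
  obtain ⟨a, b, c, hab, hac, hbc, rfl⟩ := is3Clique_iff.1 hs
  have ha : a ∈ S := hsS (by simp)
  have hb : b ∈ S := hsS (by simp)
  have hc : c ∈ S := hsS (by simp)
  simp only [mem_insert, mem_singleton] at hy
  rcases hy with rfl | rfl | rfl
  · exact hS.closedNbrIn_eq_triple ha hb hc hab hac hbc
  · rw [hS.closedNbrIn_eq_triple hb ha hc hab.symm hbc hac, insert_comm]
  · rw [hS.closedNbrIn_eq_triple hc ha hb hac.symm hbc.symm hab, insert_comm, pair_comm]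

theorem closedNbrIn_eq_of_mem (hv : v ∈ triangleVertices G S) (hy : y ∈ closedNbrIn G S v) :
    closedNbrIn G S y = closedNbrIn G S v :=
  hS.closedNbrIn_eq_of_isNClique (closedNbrIn_subset (mem_filter.1 hv).1) (mem_filter.1 hv).2 hy

theorem mem_triangleVertices_of_mem_closedNbrIn (hv : v ∈ triangleVertices G S)
    (hy : y ∈ closedNbrIn G S v) : y ∈ triangleVertices G S := by
  rw [triangleVertices, mem_filter, hS.closedNbrIn_eq_of_mem hv hy]
  exact ⟨closedNbrIn_subset (mem_filter.1 hv).1 hy, (mem_filter.1 hv).2⟩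

theorem isTrianglePacking_image_closedNbrIn :
    IsTrianglePacking G ((triangleVertices G S).image (closedNbrIn G S)) := by
  have hdisj : ∀ v ∈ triangleVertices G S, ∀ w ∈ triangleVertices G S,
      closedNbrIn G S v ≠ closedNbrIn G S w →
        Disjoint (closedNbrIn G S v) (closedNbrIn G S w) :=
    fun v hv w hw hne => disjoint_left.2 fun y hyv hyw =>
      hne ((hS.closedNbrIn_eq_of_mem hv hyv).symm.trans (hS.closedNbrIn_eq_of_mem hw hyw))
  refine ⟨?_, ?_, ?_⟩ <;> simp only [forall_mem_image]
  · exact fun v hv => (mem_filter.1 hv).2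
  · exact hdisj
  · intro v hv w hw hne u hu x hx hux
    have hxu := mem_closedNbrIn_of_adj hux (closedNbrIn_subset (mem_filter.1 hw).1 hx)
    rw [hS.closedNbrIn_eq_of_mem hv hu] at hxu
    exact disjoint_left.1 (hdisj v hv w hw hne) hxu hx

theorem biUnion_image_closedNbrIn :
    ((triangleVertices G S).image (closedNbrIn G S)).biUnion id = triangleVertices G S := by
  ext y
  simp only [mem_biUnion, mem_image, id]
  constructor
  · rintro ⟨_, ⟨v, hv, rfl⟩, hy⟩
    exact hS.mem_triangleVertices_of_mem_closedNbrIn hv hy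
  · exact fun hy => ⟨_, ⟨y, hy, rfl⟩, mem_insert_self _ _⟩

theorem not_mem_triangleVertices_of_adj (hv : v ∈ S) (hvA : v ∉ triangleVertices G S)
    (hvu : G.Adj v u) : u ∉ triangleVertices G S := fun huA =>
  hvA (hS.mem_triangleVertices_of_mem_closedNbrIn huA (mem_closedNbrIn_of_adj hvu.symm hv))

-- Two adjacent vertices of degree at least two in `G[S]` would span a `P₄` or a triangle.
theorem card_eq_one_or_card_eq_one_of_adj (hv : v ∈ S) (hvA : v ∉ triangleVertices G S)
    (hu : u ∈ S) (hvu : G.Adj v u) :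
    (G.neighborFinset v ∩ S).card = 1 ∨ (G.neighborFinset u ∩ S).card = 1 := by
  by_contra! h
  have hvpos := card_pos.2 ⟨u, mem_inter.2 ⟨(mem_neighborFinset G v u).2 hvu, hu⟩⟩
  have hupos := card_pos.2 ⟨v, mem_inter.2 ⟨(mem_neighborFinset G u v).2 hvu.symm, hv⟩⟩
  obtain ⟨w, hw, hwu⟩ := exists_mem_ne (s := G.neighborFinset v ∩ S) (by omega) u
  obtain ⟨x, hx, hxv⟩ := exists_mem_ne (s := G.neighborFinset u ∩ S) (by omega) v
  rw [mem_inter, mem_neighborFinset] at hw hx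
  by_cases hwx : w = x
  · subst hwx
    refine hvA (mem_filter.2 ⟨hv, ?_⟩)
    rw [hS.closedNbrIn_eq_triple hv hu hw.2 hvu hw.1 hx.1]
    exact is3Clique_triple_iff.2 ⟨hvu, hw.1, hx.1⟩
  · rcases hS hw.2 hv hu hx.2 hw.1.symm hvu hx.1 with h | h | h
    exacts [hwu h, hwx h, hxv h.symm]

theorem two_mul_sum_card_neighborFinset_inter_le (hdeg : ∀ v, G.degree v ≤ 3) :
    2 * ∑ v ∈ S, (G.neighborFinset v ∩ S).card ≤
      3 * S.card + (triangleVertices G S).card := by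
  set A := triangleVertices G S
  have hAS : A ⊆ S := filter_subset _ _
  have hR : ∀ v ∈ S \ A, G.neighborFinset v ∩ (S \ A) = G.neighborFinset v ∩ S := by
    intro v hv
    obtain ⟨hvS, hvA⟩ := mem_sdiff.1 hv
    ext u
    simp only [mem_inter, mem_sdiff, mem_neighborFinset]
    exact ⟨fun h => ⟨h.1, h.2.1⟩,
      fun h => ⟨h.1, h.2, hS.not_mem_triangleVertices_of_adj hvS hvA h.1⟩⟩
  have hsumR : 2 * ∑ v ∈ S \ A, (G.neighborFinset v ∩ S).card ≤ 3 * (S \ A).card := by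
    rw [← sum_congr rfl fun v hv => congrArg card (hR v hv)]
    refine two_mul_sum_card_neighborFinset_inter_le_of_adj hdeg fun v hv u hu hvu => ?_
    rw [hR v hv, hR u hu]
    exact hS.card_eq_one_or_card_eq_one_of_adj (mem_sdiff.1 hv).1 (mem_sdiff.1 hv).2
      (mem_sdiff.1 hu).1 hvu
  have hsumA : ∑ v ∈ A, (G.neighborFinset v ∩ S).card = 2 * A.card := by
    rw [sum_congr rfl fun v hv => card_neighborFinset_inter_of_mem_triangleVertices hv,
      sum_const, smul_eq_mul, mul_comm]
  have hcard := card_sdiff_add_card_eq_card hAS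
  rw [← sum_sdiff hAS]
  omega

end P4FreeOn

end P4Free

theorem exists_isTrianglePacking_card_le_of_isPathVertexCover [Fintype V] [DecidableEq V]
    {G : SimpleGraph V} [DecidableRel G.Adj] (hG : G.IsRegularOfDegree 3) {F : Finset V}
    (hF : IsPathVertexCover G 4 F) :
    ∃ T, IsTrianglePacking G T ∧ Fintype.card V ≤ 3 * F.card + T.card := by
  have hS : P4FreeOn G ↑Fᶜ := by
    rw [coe_compl]
    exact p4FreeOn_iff.2 hF
  refine ⟨_, hS.isTrianglePacking_image_closedNbrIn, ?_⟩
  have hA := hS.isTrianglePacking_image_closedNbrIn.card_biUnion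
  rw [hS.biUnion_image_closedNbrIn] at hA
  have hsum := hS.two_mul_sum_card_neighborFinset_inter_le fun v => (hG v).le
  have hcross := hG.mul_card_le_sum_add Fᶜ
  rw [compl_compl] at hcross
  have hcompl := card_compl F
  have hFle := card_le_univ F
  omega

end

/-- On a cubic graph: given a defective partition `(V¹, V²)` (each vertex has
at most one neighbor in its own part), a maximum-size family of pairwise
disjoint, pairwise non-adjacent triangles of size `t*`, and a family `T` of
such triangles with `6|T| ≥ 5t*`, both `F₁ = V ∖ Vⁱ` (with `Vⁱ` the larger
part) and `F₂ = V` minus the vertices on triangles of `T` are `4`-path vertex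
covers, and `min{|F₁|, |F₂|} ≤ (15/8)·ψ₄(G)`. -/
theorem stmt_10 {V : Type*} [Fintype V] [DecidableEq V] (G : SimpleGraph V)
    [DecidableRel G.Adj] (hcubic : G.IsRegularOfDegree 3)
    (V1 V2 : Finset V) (hpart : V1 ∪ V2 = Finset.univ) (hdisj : Disjoint V1 V2)
    (h1 : ∀ v ∈ V1, ((G.neighborFinset v) ∩ V1).card ≤ 1)
    (h2 : ∀ v ∈ V2, ((G.neighborFinset v) ∩ V2).card ≤ 1)
    (tstar : ℕ)
    (htstar : IsGreatest {n | ∃ T : Finset (Finset V),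
        (∀ s ∈ T, G.IsNClique 3 s) ∧
        (∀ s ∈ T, ∀ t ∈ T, s ≠ t → Disjoint s t) ∧
        (∀ s ∈ T, ∀ t ∈ T, s ≠ t → ∀ u ∈ s, ∀ v ∈ t, ¬G.Adj u v) ∧
        T.card = n} tstar)
    (T : Finset (Finset V))
    (hT1 : ∀ s ∈ T, G.IsNClique 3 s)
    (hT2 : ∀ s ∈ T, ∀ t ∈ T, s ≠ t → Disjoint s t)
    (hT3 : ∀ s ∈ T, ∀ t ∈ T, s ≠ t → ∀ u ∈ s, ∀ v ∈ t, ¬G.Adj u v)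
    (hT4 : 5 * tstar ≤ 6 * T.card)
    (F1 F2 : Finset V)
    (hF1 : F1 = Finset.univ \ (if V2.card ≤ V1.card then V1 else V2))
    (hF2 : F2 = Finset.univ \ T.biUnion id) :
    IsPathVertexCover G 4 F1 ∧ IsPathVertexCover G 4 F2 ∧
      (min F1.card F2.card : ℝ) ≤ 15 / 8 * (psi G 4 : ℝ) := by
  have hT : IsTrianglePacking G T := ⟨hT1, hT2, hT3⟩
  have hcover1 : IsPathVertexCover G 4 F1 := by
    rw [hF1, isPathVertexCover_univ_sdiff_iff]
    split_ifs
    exacts [p4FreeOn_of_card_neighborFinset_inter_le_one h1,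
      p4FreeOn_of_card_neighborFinset_inter_le_one h2]
  have hcover2 : IsPathVertexCover G 4 F2 := by
    rw [hF2, isPathVertexCover_univ_sdiff_iff]
    exact hT.p4FreeOn
  refine ⟨hcover1, hcover2, ?_⟩
  obtain ⟨F, hF, hFcard⟩ := exists_isPathVertexCover_card_eq_psi G 4
  obtain ⟨T', hT', hn⟩ := exists_isTrianglePacking_card_le_of_isPathVertexCover hcubic hF
  have hT'tstar : T'.card ≤ tstar := htstar.2 ⟨T', hT'.1, hT'.2.1, hT'.2.2, rfl⟩
  have hF1card : 2 * F1.card ≤ Fintype.card V := by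
    have hV := card_union_of_disjoint hdisj
    rw [hpart, card_univ] at hV
    rw [hF1, card_univ_sdiff]
    split_ifs <;> omega
  have hF2card : F2.card + 3 * T.card = Fintype.card V := by
    have hle := card_le_univ (T.biUnion id)
    rw [hF2, card_univ_sdiff, ← hT.card_biUnion]
    omega
  have hmin : 8 * min F1.card F2.card ≤ 15 * psi G 4 := by omega
  have hmin' := (Nat.cast_le (α := ℝ)).2 hmin
  push_cast at hmin'
  linarith
end

section
/- Let G = (V, E) be a finite simple graph and let A, B ⊆ V be disjoint sets of vertices such that A is an independent set, B is an independent set, and every vertex of B has at most one neighbor in A. Then the induced subgraph G[A ∪ B] contains no path of order 4; equivalently, V ∖ (A ∪ B) is a 4-path vertex cover of G. -/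
open SimpleGraph

lemma aux_no4 {V : Type*} [Fintype V] [DecidableEq V] (G : SimpleGraph V)
    [DecidableRel G.Adj]
    (A B : Finset V)
    (hA : ∀ u ∈ A, ∀ v ∈ A, ¬G.Adj u v)
    (hB : ∀ u ∈ B, ∀ v ∈ B, ¬G.Adj u v)
    (hBA : ∀ b ∈ B, ((G.neighborFinset b) ∩ A).card ≤ 1) :
    ¬ HasPathOfOrder (G.induce (↑(A ∪ B) : Set V)) 4 := by
  rintro ⟨u, v, w, hp, hlen⟩
  match w, hp, hlen with
  | .cons (u := v1) (v := v2) h1 (.cons (v := v3) h2 (.cons (v := v4) h3 .nil)), hp, _ =>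
    simp only [Walk.cons_isPath_iff, Walk.isPath_iff_eq_nil, Walk.support_cons,
      Walk.support_nil, List.mem_cons, List.mem_singleton] at hp
    have a1 : G.Adj v1 v2 := h1
    have a2 : G.Adj v2 v3 := h2
    have a3 : G.Adj v3 v4 := h3
    have m1 : (v1 : V) ∈ A ∪ B := by exact_mod_cast v1.2
    have m2 : (v2 : V) ∈ A ∪ B := by exact_mod_cast v2.2
    have m3 : (v3 : V) ∈ A ∪ B := by exact_mod_cast v3.2
    have m4 : (v4 : V) ∈ A ∪ B := by exact_mod_cast v4.2
    simp only [Finset.mem_union] at m1 m2 m3 m4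
    have key : ∀ b : V, b ∈ B → ∀ x y : V, x ∈ A → y ∈ A → x ≠ y →
        G.Adj b x → G.Adj b y → False := by
      intro b hb x y hx hy hxy abx aby
      have h2le : 1 < ((G.neighborFinset b) ∩ A).card := by
        rw [Finset.one_lt_card]
        exact ⟨x, by simp [abx, hx], y, by simp [aby, hy], hxy⟩
      exact absurd (hBA b hb) (by omega)
    have ne13 : (v1 : V) ≠ (v3 : V) := by
      intro h; exact hp.2 (Or.inr (Or.inl (Subtype.ext h)))
    have ne24 : (v2 : V) ≠ (v4 : V) := by
      intro h; exact hp.1.2 (Or.inr (Or.inl (Subtype.ext h)))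
    rcases m2 with h2A | h2B
    · -- v2 ∈ A, v3 ∈ B
      have h3B : (v3 : V) ∈ B := m3.resolve_left (fun h3A => hA _ h2A _ h3A a2)
      have h4A : (v4 : V) ∈ A := m4.resolve_right (fun h4B => hB _ h3B _ h4B a3)
      exact key v3 h3B v2 v4 h2A h4A ne24 a2.symm a3
    · -- v2 ∈ B, v1, v3 ∈ A
      have h1A : (v1 : V) ∈ A := m1.resolve_right (fun h1B => hB _ h1B _ h2B a1)
      have h3A : (v3 : V) ∈ A := m3.resolve_right (fun h3B => hB _ h2B _ h3B a2)
      exact key v2 h2B v1 v3 h1A h3A ne13 a1.symm a2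

/-- If `A` and `B` are disjoint independent sets such that every vertex of
`B` has at most one neighbor in `A`, then `G[A ∪ B]` has no path of order
`4`; equivalently, `V ∖ (A ∪ B)` is a `4`-path vertex cover of `G`. -/
theorem stmt_11 {V : Type*} [Fintype V] [DecidableEq V] (G : SimpleGraph V)
    [DecidableRel G.Adj]
    (A B : Finset V) (hdisj : Disjoint A B)
    (hA : ∀ u ∈ A, ∀ v ∈ A, ¬G.Adj u v)
    (hB : ∀ u ∈ B, ∀ v ∈ B, ¬G.Adj u v)
    (hBA : ∀ b ∈ B, ((G.neighborFinset b) ∩ A).card ≤ 1) :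
    ¬ HasPathOfOrder (G.induce (↑(A ∪ B) : Set V)) 4 ∧
      IsPathVertexCover G 4 (Finset.univ \ (A ∪ B)) := by
  have h := aux_no4 G A B hA hB hBA
  refine ⟨h, ?_⟩
  have hs : ((↑(Finset.univ \ (A ∪ B)) : Set V)ᶜ) = ↑(A ∪ B) := by
    ext x; simp; tauto
  rw [IsPathVertexCover, hs]
  exact h
end

section
/- Every finite simple graph G = (V, E) of maximum degree at most 2 satisfies ψ_4(G) ≤ (2/5)·|V|. -/
open SimpleGraph

/-! Since every vertex has degree at most `2`, the middle vertices `b`, `c` of a path `a b c d`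
have no neighbours off the path. If `a` has a further neighbour `x`, deleting the ends of the path
`x a b c d` cuts `a b c` off from the remaining vertices; otherwise deleting `d` does. Either way
at most two fifths of the vertices split off are deleted, and induction on the vertex set
finishes the proof. -/

open Finset

section

variable {V : Type*}

-- `a ≠ b`, `b ≠ c` and `c ≠ d` are implied by adjacency.
def HasP4On (G : SimpleGraph V) (t : Finset V) : Prop :=
  ∃ a ∈ t, ∃ b ∈ t, ∃ c ∈ t, ∃ d ∈ t,
    G.Adj a b ∧ G.Adj b c ∧ G.Adj c d ∧ a ≠ c ∧ b ≠ d ∧ a ≠ d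

variable {G : SimpleGraph V}

lemma isPathVertexCover_four_of_not_hasP4On [Fintype V] [DecidableEq V] {F : Finset V}
    (h : ¬ HasP4On G (univ \ F)) : IsPathVertexCover G 4 F := by
  rintro ⟨u, v, w, hw, hlen⟩
  set p : ℕ → V := fun i => w.getVert i
  have hadj : ∀ i < 3, G.Adj (p i) (p (i + 1)) := fun i hi => w.adj_getVert_succ (by omega)
  have hne : ∀ i ≤ 3, ∀ j ≤ 3, i ≠ j → p i ≠ p j := fun i hi j hj hij hp =>
    hij (hw.getVert_injOn (by simp; omega) (by simp; omega) (Subtype.ext hp))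
  have hmem : ∀ i, p i ∈ univ \ F := fun i =>
    mem_sdiff.mpr ⟨mem_univ _, (w.getVert i).2⟩
  exact h ⟨p 0, hmem 0, p 1, hmem 1, p 2, hmem 2, p 3, hmem 3, hadj 0 (by omega),
    hadj 1 (by omega), hadj 2 (by omega), hne 0 (by omega) 2 (by omega) (by omega),
    hne 1 (by omega) 3 (by omega) (by omega), hne 0 (by omega) 3 (by omega) (by omega)⟩

lemma not_hasP4On_of_card_le_three [DecidableEq V] {t : Finset V} (ht : #t ≤ 3) :
    ¬ HasP4On G t := by
  rintro ⟨a, ha, b, hb, c, hc, d, hd, hab, hbc, hcd, hac, hbd, had⟩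
  have hsub : {a, b, c, d} ⊆ t := by simp [insert_subset_iff, ha, hb, hc, hd]
  have hcard : #{a, b, c, d} = 4 := card_eq_four.mpr
    ⟨a, b, c, d, hab.ne, hac, had, hbc.ne, hbd, hcd.ne, rfl⟩
  have := card_le_card hsub
  omega

lemma not_hasP4On_union [DecidableEq V] {A B : Finset V} (hA : ¬ HasP4On G A)
    (hB : ¬ HasP4On G B) (hsep : ∀ u ∈ A, ∀ w ∈ B, ¬ G.Adj u w) :
    ¬ HasP4On G (A ∪ B) := by
  have stayA : ∀ u ∈ A, ∀ w ∈ A ∪ B, G.Adj u w → w ∈ A := fun u hu w hw huw =>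
    (mem_union.mp hw).resolve_right (hsep u hu w · huw)
  have stayB : ∀ u ∈ B, ∀ w ∈ A ∪ B, G.Adj u w → w ∈ B := fun u hu w hw huw =>
    (mem_union.mp hw).resolve_left (hsep w · u hu huw.symm)
  rintro ⟨a, ha, b, hb, c, hc, d, hd, hab, hbc, hcd, hne⟩
  rcases mem_union.mp ha with haA | haB
  · have hbA := stayA a haA b hb hab
    have hcA := stayA b hbA c hc hbc
    exact hA ⟨a, haA, b, hbA, c, hcA, d, stayA c hcA d hd hcd, hab, hbc, hcd, hne⟩
  · have hbB := stayB a haB b hb hab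
    have hcB := stayB b hbB c hc hbc
    exact hB ⟨a, haB, b, hbB, c, hcB, d, stayB c hcB d hd hcd, hab, hbc, hcd, hne⟩

lemma eq_or_eq_of_adj_of_degree_le_two [DecidableEq V] {u x y z : V}
    [Fintype (G.neighborSet u)] (hu : G.degree u ≤ 2) (hx : G.Adj u x) (hy : G.Adj u y)
    (hxy : x ≠ y) (hz : G.Adj u z) : z = x ∨ z = y := by
  by_contra! h
  have hsub : {x, y, z} ⊆ G.neighborFinset u := by simp [insert_subset_iff, hx, hy, hz]
  have := card_le_card hsub
  rw [card_neighborFinset_eq_degree,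
    card_eq_three.mpr ⟨x, y, z, hxy, h.1.symm, h.2.symm, rfl⟩] at this
  omega

lemma exists_cover_of_exists_cover_sdiff [DecidableEq V] {s K F : Finset V} (hKF : K ∪ F ⊆ s)
    (hdisj : Disjoint K F) (hcard : 3 * #F ≤ 2 * #K) (hK : ¬ HasP4On G K)
    (hsep : ∀ u ∈ K, ∀ w ∈ s, G.Adj u w → w ∈ K ∪ F)
    (hrest : ∃ F' ⊆ (s \ (K ∪ F)), 5 * #F' ≤ 2 * #(s \ (K ∪ F)) ∧
      ¬ HasP4On G ((s \ (K ∪ F)) \ F')) :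
    ∃ F'' ⊆ s, 5 * #F'' ≤ 2 * #s ∧ ¬ HasP4On G (s \ F'') := by
  obtain ⟨F', hF's, hF'card, hF'⟩ := hrest
  refine ⟨F ∪ F', union_subset (subset_union_right.trans hKF) (hF's.trans sdiff_subset), ?_, ?_⟩
  · have := card_union_le F F'
    have := card_sdiff_add_card_eq_card hKF
    have := card_union_of_disjoint hdisj
    omega
  · have hsplit : s \ (F ∪ F') = K ∪ ((s \ (K ∪ F)) \ F') := by
      ext x
      have := @hF's x
      have := @hKF x
      have : x ∈ K → x ∉ F := fun hx => disjoint_left.mp hdisj hx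
      simp only [mem_sdiff, mem_union] at *
      tauto
    rw [hsplit]
    refine not_hasP4On_union hK hF' fun u hu w hw huw => ?_
    simp only [mem_sdiff] at hw
    exact hw.1.2 (hsep u hu w hw.1.1 huw)

theorem exists_subset_card_le_not_hasP4On [DecidableEq V] [G.LocallyFinite]
    (hdeg : ∀ v, G.degree v ≤ 2) (s : Finset V) :
    ∃ F ⊆ s, 5 * #F ≤ 2 * #s ∧ ¬ HasP4On G (s \ F) := by
  induction s using Finset.strongInduction with
  | H s ih =>
  by_cases hP : HasP4On G s
  swap
  · exact ⟨∅, empty_subset s, by simp, by simpa⟩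
  obtain ⟨a, ha, b, hb, c, hc, d, hd, hab, hbc, hcd, hac, hbd, had⟩ := hP
  have hrest : ∀ R ⊆ s, R.Nonempty → _ := fun R hR hRne => ih (s \ R) (sdiff_ssubset hR hRne)
  have hb_nbrs : ∀ w, G.Adj b w → w = a ∨ w = c := fun w =>
    eq_or_eq_of_adj_of_degree_le_two (hdeg b) hab.symm hbc hac
  have hc_nbrs : ∀ w, G.Adj c w → w = b ∨ w = d := fun w =>
    eq_or_eq_of_adj_of_degree_le_two (hdeg c) hbc.symm hcd hbd
  have hK : #{a, b, c} = 3 := card_eq_three.mpr ⟨a, b, c, hab.ne, hac, hbc.ne, rfl⟩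
  by_cases hext : ∃ x ∈ s, G.Adj a x ∧ x ≠ b ∧ x ≠ c ∧ x ≠ d
  · -- The path extends to `x a b c d`; deleting its two ends isolates `a b c`.
    obtain ⟨x, hx, hax, hxb, hxc, hxd⟩ := hext
    have ha_nbrs : ∀ w, G.Adj a w → w = x ∨ w = b := fun w =>
      eq_or_eq_of_adj_of_degree_le_two (hdeg a) hax hab hxb
    have hR : {a, b, c} ∪ {x, d} ⊆ s := by simp [insert_subset_iff, ha, hb, hc, hd, hx]
    refine exists_cover_of_exists_cover_sdiff hR ?_ ?_
      (not_hasP4On_of_card_le_three hK.le) ?_ (hrest _ hR (by simp))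
    · simp [hax.ne', hxb, hxc, had.symm, hbd.symm, hcd.ne']
    · have := card_le_two (a := x) (b := d)
      omega
    · simp only [mem_insert, mem_singleton, mem_union]
      rintro u (rfl | rfl | rfl) w - huw
      · rcases ha_nbrs w huw with rfl | rfl <;> simp
      · rcases hb_nbrs w huw with rfl | rfl <;> simp
      · rcases hc_nbrs w huw with rfl | rfl <;> simp
  · -- Every neighbour of `a` lies on the path, so deleting `d` isolates `a b c`.
    push Not at hext
    have hR : {a, b, c} ∪ {d} ⊆ s := by simp [insert_subset_iff, ha, hb, hc, hd]
    refine exists_cover_of_exists_cover_sdiff hR ?_ ?_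
      (not_hasP4On_of_card_le_three hK.le) ?_ (hrest _ hR (by simp))
    · simp [hbd.symm, hcd.ne', had.symm]
    · simp [hK]
    · simp only [mem_insert, mem_singleton, mem_union]
      rintro u (rfl | rfl | rfl) w hw huw
      · have := hext w hw huw
        tauto
      · rcases hb_nbrs w huw with rfl | rfl <;> simp
      · rcases hc_nbrs w huw with rfl | rfl <;> simp

end

/-- Every graph of maximum degree at most `2` satisfies `ψ₄(G) ≤ (2/5)·|V|`. -/
theorem stmt_12 {V : Type*} [Fintype V] (G : SimpleGraph V) [DecidableRel G.Adj]
    (hdeg : ∀ v, G.degree v ≤ 2) :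
    5 * psi G 4 ≤ 2 * Fintype.card V := by
  classical
  obtain ⟨F, -, hF, hfree⟩ := exists_subset_card_le_not_hasP4On hdeg (univ : Finset V)
  have hpsi : psi G 4 ≤ #F := Nat.sInf_le ⟨F, isPathVertexCover_four_of_not_hasP4On hfree, rfl⟩
  rw [card_univ] at hF
  omega
end

section
/- Let d ≥ 4 be even and let G = (V, E) be a d-regular finite simple graph. Let V_1, …, V_{d−2} ⊆ V be pairwise disjoint sets and, for each i, let G_i denote the induced subgraph G[V ∖ (V_1 ∪ ⋯ ∪ V_{i−1})]; set V_{d−1} = V ∖ (V_1 ∪ ⋯ ∪ V_{d−2}). Assume for every i ∈ {1, …, d−2}: V_i is an independent set, every vertex of V_i has degree exactly d − i + 1 in G_i, and G[V ∖ (V_1 ∪ ⋯ ∪ V_i)] has maximum degree at most d − i (so G[V_{d−1}] has maximum degree at most 2). Let U be a minimum 4-path vertex cover of G[V_{d−1}]. Then: (a) U ∪ V_1 ∪ ⋯ ∪ V_{d−2} is a 4-path vertex cover of G, and V ∖ (V_{2i−1} ∪ V_{2i}) is a 4-path vertex cover of G for every i ∈ {1, …, d/2 − 1}; (b) the minimum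 size among these d/2 covers is at most ((3d − 2)/(3d + 4))·|V|; (c) consequently this minimum is at most [(3d − 2)(2d − 2)] / [(3d + 4)(d − 2)] · ψ_4(G). -/
open SimpleGraph

section Aux

variable {V : Type*}

lemma build_path {G : SimpleGraph V} {T : Set V} {a b c d : V}
    (ha : a ∈ T) (hb : b ∈ T) (hc : c ∈ T) (hd : d ∈ T)
    (hab : G.Adj a b) (hbc : G.Adj b c) (hcd : G.Adj c d)
    (hac : a ≠ c) (had : a ≠ d) (hbd : b ≠ d) :
    HasPathOfOrder (G.induce T) 4 := by
  have h1 : (G.induce T).Adj ⟨a, ha⟩ ⟨b, hb⟩ := hab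
  have h2 : (G.induce T).Adj ⟨b, hb⟩ ⟨c, hc⟩ := hbc
  have h3 : (G.induce T).Adj ⟨c, hc⟩ ⟨d, hd⟩ := hcd
  refine ⟨⟨a, ha⟩, ⟨d, hd⟩, .cons h1 (.cons h2 (.cons h3 .nil)), ?_, rfl⟩
  simp [Walk.isPath_def, List.nodup_cons, Subtype.ext_iff, hab.ne, hbc.ne, hcd.ne, hac, had, hbd]

lemma extract_path {G : SimpleGraph V} {T : Set V}
    (h : HasPathOfOrder (G.induce T) 4) :
    ∃ a b c d : V, a ∈ T ∧ b ∈ T ∧ c ∈ T ∧ d ∈ T ∧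
      G.Adj a b ∧ G.Adj b c ∧ G.Adj c d ∧
      a ≠ b ∧ a ≠ c ∧ a ≠ d ∧ b ≠ c ∧ b ≠ d ∧ c ≠ d := by
  obtain ⟨u, v, w, hp, hlen⟩ := h
  cases w with
  | nil => simp at hlen
  | cons h1 w1 =>
    cases w1 with
    | nil => simp at hlen
    | cons h2 w2 =>
      cases w2 with
      | nil => simp at hlen
      | cons h3 w3 =>
        cases w3 with
        | cons h4 w4 => simp [Walk.length_cons] at hlen
        | nil =>
          have hn := hp.support_nodup
          simp [List.nodup_cons, Subtype.ext_iff] at hn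
          rename_i x y
          exact ⟨u.1, x.1, y.1, v.1, u.2, x.2, y.2, v.2, h1, h2, h3,
            hn.1.1, hn.1.2.1, hn.1.2.2, hn.2.1.1, hn.2.1.2, hn.2.2⟩

lemma hasP4_mono {G : SimpleGraph V} {S T : Set V} (hST : S ⊆ T)
    (h : HasPathOfOrder (G.induce S) 4) : HasPathOfOrder (G.induce T) 4 := by
  obtain ⟨a, b, c, d, ha, hb, hc, hd, h1, h2, h3, n1, n2, n3, n4, n5, n6⟩ := extract_path h
  exact build_path (hST ha) (hST hb) (hST hc) (hST hd) h1 h2 h3 n2 n3 n5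

variable [DecidableEq V]

lemma cover_extend {G : SimpleGraph V} {s W D F' : Finset V}
    (hWs : W ⊆ s) (hDW : D ⊆ W) (hF' : F' ⊆ s \ W)
    (hclosed : ∀ w ∈ W \ D, ∀ y ∈ s, G.Adj w y → y ∈ W)
    (hsmall : (W \ D).card ≤ 3)
    (hcov : ¬ HasPathOfOrder (G.induce (↑((s \ W) \ F') : Set V)) 4) :
    ¬ HasPathOfOrder (G.induce (↑(s \ (D ∪ F')) : Set V)) 4 := by
  intro h
  obtain ⟨a, b, c, d, ha, hb, hc, hd, h1, h2, h3, n1, n2, n3, n4, n5, n6⟩ := extract_path h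
  simp only [Finset.coe_sdiff, Set.mem_diff, Finset.mem_coe, Finset.mem_sdiff,
    Finset.mem_union, not_or] at ha hb hc hd
  have step : ∀ x y : V, x ∈ W → (x ∈ s ∧ x ∉ D ∧ x ∉ F') →
      (y ∈ s ∧ y ∉ D ∧ y ∉ F') → G.Adj x y → y ∈ W := by
    intro x y hxW hx hy hxy
    exact hclosed x (Finset.mem_sdiff.mpr ⟨hxW, hx.2.1⟩) y hy.1 hxy
  have inWD : ∀ x : V, x ∈ W → (x ∈ s ∧ x ∉ D ∧ x ∉ F') → x ∈ W \ D := by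
    intro x hxW hx; exact Finset.mem_sdiff.mpr ⟨hxW, hx.2.1⟩
  have allW : a ∈ W ∨ b ∈ W ∨ c ∈ W ∨ d ∈ W → a ∈ W ∧ b ∈ W ∧ c ∈ W ∧ d ∈ W := by
    rintro (hW | hW | hW | hW)
    · have hbW := step a b hW ha hb h1
      have hcW := step b c hbW hb hc h2
      exact ⟨hW, hbW, hcW, step c d hcW hc hd h3⟩
    · have haW := step b a hW hb ha h1.symm
      have hcW := step b c hW hb hc h2
      exact ⟨haW, hW, hcW, step c d hcW hc hd h3⟩
    · have hbW := step c b hW hc hb h2.symm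
      have hdW := step c d hW hc hd h3
      exact ⟨step b a hbW hb ha h1.symm, hbW, hW, hdW⟩
    · have hcW := step d c hW hd hc h3.symm
      have hbW := step c b hcW hc hb h2.symm
      exact ⟨step b a hbW hb ha h1.symm, hbW, hcW, hW⟩
  by_cases hany : a ∈ W ∨ b ∈ W ∨ c ∈ W ∨ d ∈ W
  · obtain ⟨haW, hbW, hcW, hdW⟩ := allW hany
    have hsub4 : ({a, b, c, d} : Finset V) ⊆ W \ D := by
      intro x hx
      simp only [Finset.mem_insert, Finset.mem_singleton] at hx
      rcases hx with rfl | rfl | rfl | rfl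
      · exact inWD x haW ha
      · exact inWD x hbW hb
      · exact inWD x hcW hc
      · exact inWD x hdW hd
    have : ({a, b, c, d} : Finset V).card = 4 := by
      rw [Finset.card_insert_of_notMem (by simp [n1, n2, n3]),
        Finset.card_insert_of_notMem (by simp [n4, n5]),
        Finset.card_insert_of_notMem (by simp [n6]), Finset.card_singleton]
    have := Finset.card_le_card hsub4
    omega
  · push_neg at hany
    apply hcov
    have hmem : ∀ x : V, (x ∈ s ∧ x ∉ D ∧ x ∉ F') → x ∉ W →
        x ∈ (↑((s \ W) \ F') : Set V) := by
      intro x hx hxW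
      simp only [Finset.coe_sdiff, Set.mem_diff, Finset.mem_coe, Finset.mem_sdiff]
      exact ⟨⟨hx.1, hxW⟩, hx.2.2⟩
    exact build_path (hmem a ha hany.1) (hmem b hb hany.2.1) (hmem c hc hany.2.2.1)
      (hmem d hd hany.2.2.2) h1 h2 h3 n2 n3 n5

lemma card_le3 (a b c : V) : ({a,b,c} : Finset V).card ≤ 3 := by
  have h1 := Finset.card_insert_le a ({b,c} : Finset V)
  have h2 := Finset.card_insert_le b ({c} : Finset V)
  simp only [Finset.card_singleton] at *
  omega

lemma card_le2 (a b : V) : ({a,b} : Finset V).card ≤ 2 := by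
  have h1 := Finset.card_insert_le a ({b} : Finset V)
  simp only [Finset.card_singleton] at *
  omega

lemma card_eq3 {a b c : V} (h1 : a ≠ b) (h2 : a ≠ c) (h3 : b ≠ c) :
    ({a,b,c} : Finset V).card = 3 := by
  rw [Finset.card_insert_of_notMem (by simp [h1, h2]),
    Finset.card_insert_of_notMem (by simp [h3]), Finset.card_singleton]

lemma card_eq4 {a b c d : V} (h1 : a ≠ b) (h2 : a ≠ c) (h3 : a ≠ d) (h4 : b ≠ c)
    (h5 : b ≠ d) (h6 : c ≠ d) : ({a,b,c,d} : Finset V).card = 4 := by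
  rw [Finset.card_insert_of_notMem (by simp [h1, h2, h3]), card_eq3 h4 h5 h6]

lemma card_eq5 {a b c d e : V} (h1 : a ≠ b) (h2 : a ≠ c) (h3 : a ≠ d) (h4 : a ≠ e)
    (h5 : b ≠ c) (h6 : b ≠ d) (h7 : b ≠ e) (h8 : c ≠ d) (h9 : c ≠ e) (h10 : d ≠ e) :
    ({a,b,c,d,e} : Finset V).card = 5 := by
  rw [Finset.card_insert_of_notMem (by simp [h1, h2, h3, h4]), card_eq4 h5 h6 h7 h8 h9 h10]

variable [Fintype V]

lemma two_nbrs {G : SimpleGraph V} [DecidableRel G.Adj] {s : Finset V}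
    (hdeg : ∀ v ∈ s, ((G.neighborFinset v) ∩ s).card ≤ 2)
    {x p q : V} (hx : x ∈ s) (hp : p ∈ s) (hq : q ∈ s)
    (hxp : G.Adj x p) (hxq : G.Adj x q) (hpq : p ≠ q) :
    ∀ y ∈ s, G.Adj x y → y = p ∨ y = q := by
  intro y hy hxy
  by_contra hc
  push_neg at hc
  have hsub : ({p, q, y} : Finset V) ⊆ G.neighborFinset x ∩ s := by
    intro z hz
    simp only [Finset.mem_insert, Finset.mem_singleton] at hz
    rcases hz with rfl | rfl | rfl <;>
      simp [Finset.mem_inter, SimpleGraph.mem_neighborFinset, *]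
  have h3 := Finset.card_le_card hsub
  rw [card_eq3 hpq (Ne.symm hc.1) (Ne.symm hc.2)] at h3
  have := hdeg x hx
  omega

lemma main_step {G : SimpleGraph V} [DecidableRel G.Adj] {s W D : Finset V}
    (hWs : W ⊆ s) (hDW : D ⊆ W)
    (hclosed : ∀ w ∈ W \ D, ∀ y ∈ s, G.Adj w y → y ∈ W)
    (hsmall : (W \ D).card ≤ 3)
    (h52 : 5 * D.card ≤ 2 * W.card)
    (IH : ∃ F', F' ⊆ s \ W ∧ (¬ HasPathOfOrder (G.induce (↑((s \ W) \ F') : Set V)) 4) ∧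
      5 * F'.card ≤ 2 * (s \ W).card) :
    ∃ F, F ⊆ s ∧ (¬ HasPathOfOrder (G.induce (↑(s \ F) : Set V)) 4) ∧
      5 * F.card ≤ 2 * s.card := by
  obtain ⟨F', hF's, hF'cov, hF'card⟩ := IH
  refine ⟨D ∪ F', ?_, cover_extend hWs hDW hF's hclosed hsmall hF'cov, ?_⟩
  · intro z hz
    rcases Finset.mem_union.mp hz with h | h
    · exact hWs (hDW h)
    · exact Finset.sdiff_subset (hF's h)
  · have hc1 := Finset.card_union_le D F'
    have hc2 := Finset.card_sdiff_of_subset hWs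
    have hc3 := Finset.card_le_card hWs
    omega

lemma maxdeg2_cover (G : SimpleGraph V) [DecidableRel G.Adj] :
    ∀ n : ℕ, ∀ s : Finset V, s.card ≤ n →
    (∀ v ∈ s, ((G.neighborFinset v) ∩ s).card ≤ 2) →
    ∃ F, F ⊆ s ∧ (¬ HasPathOfOrder (G.induce (↑(s \ F) : Set V)) 4) ∧
      5 * F.card ≤ 2 * s.card := by
  intro n
  induction n with
  | zero =>
    intro s hs _
    have : s = ∅ := Finset.card_eq_zero.mp (Nat.le_zero.mp hs)
    subst this
    refine ⟨∅, by simp, ?_, by simp⟩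
    intro h
    obtain ⟨a, b, c, d, ha, _⟩ := extract_path h
    simp at ha
  | succ n ih =>
    intro s hsn hdeg
    by_cases hP4 : HasPathOfOrder (G.induce (↑s : Set V)) 4
    · obtain ⟨x0, x1, x2, x3, h0, h1, h2, h3, a01, a12, a23,
        n01, n02, n03, n12, n13, n23⟩ := extract_path hP4
      rw [Finset.mem_coe] at h0 h1 h2 h3
      have tn : ∀ {x p q : V}, x ∈ s → p ∈ s → q ∈ s → G.Adj x p → G.Adj x q → p ≠ q →
          ∀ y ∈ s, G.Adj x y → y = p ∨ y = q :=
        fun hx hp hq hxp hxq hpq => two_nbrs hdeg hx hp hq hxp hxq hpq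
      have getIH : ∀ W : Finset V, W.Nonempty → W ⊆ s →
          ∃ F', F' ⊆ s \ W ∧
            (¬ HasPathOfOrder (G.induce (↑((s \ W) \ F') : Set V)) 4) ∧
            5 * F'.card ≤ 2 * (s \ W).card := by
        intro W hne hWs
        apply ih
        · have := Finset.card_sdiff_of_subset hWs
          have := Finset.card_le_card hWs
          have := Finset.card_pos.mpr hne
          omega
        · intro v hv
          exact le_trans (Finset.card_le_card
            (Finset.inter_subset_inter (le_refl _) Finset.sdiff_subset))
            (hdeg v (Finset.sdiff_subset hv))
      by_cases hx0 : ∀ y ∈ s, G.Adj x0 y → y = x1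
      · -- Case 1 : x0 has degree 1
        refine main_step (W := {x0, x1, x2}) (D := {x2}) ?_ (by simp) ?_ ?_ ?_
          (getIH _ ⟨x0, by simp⟩ ?_)
        · intro z hz; simp only [Finset.mem_insert, Finset.mem_singleton] at hz
          rcases hz with rfl | rfl | rfl <;> assumption
        · intro w hw y hy hadj
          simp only [Finset.mem_sdiff, Finset.mem_insert, Finset.mem_singleton] at hw
          obtain ⟨hw1, hw2⟩ := hw
          rcases hw1 with rfl | rfl | rfl
          · rw [hx0 y hy hadj]; simp
          · rcases tn h1 h0 h2 a01.symm a12 n02 y hy hadj with rfl | rfl <;> simp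
          · exact absurd rfl hw2
        · exact le_trans (Finset.card_le_card Finset.sdiff_subset) (card_le3 _ _ _)
        · rw [Finset.card_singleton, card_eq3 n01 n02 n12]; norm_num
        · intro z hz; simp only [Finset.mem_insert, Finset.mem_singleton] at hz
          rcases hz with rfl | rfl | rfl <;> assumption
      · by_cases hx3 : ∀ y ∈ s, G.Adj x3 y → y = x2
        · -- Case 2 : x3 has degree 1
          refine main_step (W := {x1, x2, x3}) (D := {x1}) ?_ (by simp) ?_ ?_ ?_
            (getIH _ ⟨x1, by simp⟩ ?_)
          · intro z hz; simp only [Finset.mem_insert, Finset.mem_singleton] at hz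
            rcases hz with rfl | rfl | rfl <;> assumption
          · intro w hw y hy hadj
            simp only [Finset.mem_sdiff, Finset.mem_insert, Finset.mem_singleton] at hw
            obtain ⟨hw1, hw2⟩ := hw
            rcases hw1 with rfl | rfl | rfl
            · exact absurd rfl hw2
            · rcases tn h2 h1 h3 a12.symm a23 n13 y hy hadj with rfl | rfl <;> simp
            · rw [hx3 y hy hadj]; simp
          · exact le_trans (Finset.card_le_card Finset.sdiff_subset) (card_le3 _ _ _)
          · rw [Finset.card_singleton, card_eq3 n12 n13 n23]; norm_num
          · intro z hz; simp only [Finset.mem_insert, Finset.mem_singleton] at hz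
            rcases hz with rfl | rfl | rfl <;> assumption
        · push_neg at hx0 hx3
          obtain ⟨a, has, a0a, hax1⟩ := hx0
          obtain ⟨b, hbs, a3b, hbx2⟩ := hx3
          have hax0 : a ≠ x0 := a0a.ne'
          have hax2 : a ≠ x2 := by
            rintro rfl
            rcases tn h2 h1 h3 a12.symm a23 n13 x0 h0 a0a.symm with rfl | rfl
            · exact n01 rfl
            · exact n03 rfl
          by_cases hax3 : a = x3
          · -- Case C4
            subst hax3
            refine main_step (W := {x0, x1, x2, a}) (D := {x0}) ?_ (by simp) ?_ ?_ ?_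
              (getIH _ ⟨x0, by simp⟩ ?_)
            · intro z hz; simp only [Finset.mem_insert, Finset.mem_singleton] at hz
              rcases hz with rfl | rfl | rfl | rfl <;> assumption
            · intro w hw y hy hadj
              simp only [Finset.mem_sdiff, Finset.mem_insert, Finset.mem_singleton] at hw
              obtain ⟨hw1, hw2⟩ := hw
              rcases hw1 with rfl | rfl | rfl | rfl
              · exact absurd rfl hw2
              · rcases tn h1 h0 h2 a01.symm a12 n02 y hy hadj with rfl | rfl <;> simp
              · rcases tn h2 h1 h3 a12.symm a23 n13 y hy hadj with rfl | rfl <;> simp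
              · rcases tn h3 h2 h0 a23.symm a0a.symm n02.symm y hy hadj with rfl | rfl <;>
                  simp
            · refine le_trans (Finset.card_le_card ?_) (card_le3 x1 x2 a)
              intro z hz
              simp only [Finset.mem_sdiff, Finset.mem_insert, Finset.mem_singleton] at hz ⊢
              tauto
            · rw [Finset.card_singleton, card_eq4 n01 n02 n03 n12 n13 n23]; norm_num
            · intro z hz; simp only [Finset.mem_insert, Finset.mem_singleton] at hz
              rcases hz with rfl | rfl | rfl | rfl <;> assumption
          · by_cases hao : ∀ y ∈ s, G.Adj a y → y = x0
            · -- Case: a has degree 1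
              refine main_step (W := {a, x0, x1}) (D := {x1}) ?_ (by simp) ?_ ?_ ?_
                (getIH _ ⟨a, by simp⟩ ?_)
              · intro z hz; simp only [Finset.mem_insert, Finset.mem_singleton] at hz
                rcases hz with rfl | rfl | rfl <;> assumption
              · intro w hw y hy hadj
                simp only [Finset.mem_sdiff, Finset.mem_insert, Finset.mem_singleton] at hw
                obtain ⟨hw1, hw2⟩ := hw
                rcases hw1 with rfl | rfl | rfl
                · rw [hao y hy hadj]; simp
                · rcases tn h0 h1 has a01 a0a hax1.symm y hy hadj with rfl | rfl <;> simp
                · exact absurd rfl hw2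
              · exact le_trans (Finset.card_le_card Finset.sdiff_subset) (card_le3 _ _ _)
              · rw [Finset.card_singleton, card_eq3 hax0 hax1 n01]; norm_num
              · intro z hz; simp only [Finset.mem_insert, Finset.mem_singleton] at hz
                rcases hz with rfl | rfl | rfl <;> assumption
            · push_neg at hao
              obtain ⟨c, hcs, aac, hcx0⟩ := hao
              have hca : c ≠ a := aac.ne'
              have hc1 : c ≠ x1 := by
                rintro rfl
                rcases tn h1 h0 h2 a01.symm a12 n02 a has aac.symm with rfl | rfl
                · exact hax0 rfl
                · exact hax2 rfl
              have hc2 : c ≠ x2 := by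
                rintro rfl
                rcases tn h2 h1 h3 a12.symm a23 n13 a has aac.symm with rfl | rfl
                · exact hax1 rfl
                · exact hax3 rfl
              by_cases hcx3 : c = x3
              · -- Case C5
                subst hcx3
                refine main_step (W := {a, x0, x1, x2, c}) (D := {x1, c}) ?_ ?_ ?_ ?_ ?_
                  (getIH _ ⟨a, by simp⟩ ?_)
                · intro z hz; simp only [Finset.mem_insert, Finset.mem_singleton] at hz
                  rcases hz with rfl | rfl | rfl | rfl | rfl <;> assumption
                · intro z hz; simp only [Finset.mem_insert, Finset.mem_singleton] at hz ⊢
                  tauto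
                · intro w hw y hy hadj
                  simp only [Finset.mem_sdiff, Finset.mem_insert, Finset.mem_singleton,
                    not_or] at hw
                  obtain ⟨hw1, hw2, hw3⟩ := hw
                  rcases hw1 with rfl | rfl | rfl | rfl | rfl
                  · rcases tn has h0 h3 a0a.symm aac n03 y hy hadj with rfl | rfl <;> simp
                  · rcases tn h0 h1 has a01 a0a hax1.symm y hy hadj with rfl | rfl <;>
                      simp
                  · exact absurd rfl hw2
                  · rcases tn h2 h1 h3 a12.symm a23 n13 y hy hadj with rfl | rfl <;> simp
                  · exact absurd rfl hw3
                · refine le_trans (Finset.card_le_card ?_) (card_le3 a x0 x2)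
                  intro z hz
                  simp only [Finset.mem_sdiff, Finset.mem_insert, Finset.mem_singleton,
                    not_or] at hz ⊢
                  tauto
                · rw [card_eq5 hax0 hax1 hax2 hax3 n01 n02 n03 n12 n13 n23]
                  exact le_trans (Nat.mul_le_mul_left 5 (card_le2 x1 c)) (by norm_num)
                · intro z hz; simp only [Finset.mem_insert, Finset.mem_singleton] at hz
                  rcases hz with rfl | rfl | rfl | rfl | rfl <;> assumption
              · -- Case P5
                refine main_step (W := {c, a, x0, x1, x2}) (D := {c, x2}) ?_ ?_ ?_ ?_ ?_
                  (getIH _ ⟨c, by simp⟩ ?_)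
                · intro z hz; simp only [Finset.mem_insert, Finset.mem_singleton] at hz
                  rcases hz with rfl | rfl | rfl | rfl | rfl <;> assumption
                · intro z hz; simp only [Finset.mem_insert, Finset.mem_singleton] at hz ⊢
                  tauto
                · intro w hw y hy hadj
                  simp only [Finset.mem_sdiff, Finset.mem_insert, Finset.mem_singleton,
                    not_or] at hw
                  obtain ⟨hw1, hw2, hw3⟩ := hw
                  rcases hw1 with rfl | rfl | rfl | rfl | rfl
                  · exact absurd rfl hw2
                  · rcases tn has h0 hcs a0a.symm aac hcx0.symm y hy hadj with
                      rfl | rfl <;> simp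
                  · rcases tn h0 h1 has a01 a0a hax1.symm y hy hadj with rfl | rfl <;>
                      simp
                  · rcases tn h1 h0 h2 a01.symm a12 n02 y hy hadj with rfl | rfl <;> simp
                  · exact absurd rfl hw3
                · refine le_trans (Finset.card_le_card ?_) (card_le3 a x0 x1)
                  intro z hz
                  simp only [Finset.mem_sdiff, Finset.mem_insert, Finset.mem_singleton,
                    not_or] at hz ⊢
                  tauto
                · rw [card_eq5 hca hcx0 hc1 hc2 hax0 hax1 hax2 n01 n02 n12]
                  exact le_trans (Nat.mul_le_mul_left 5 (card_le2 c x2)) (by norm_num)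
                · intro z hz; simp only [Finset.mem_insert, Finset.mem_singleton] at hz
                  rcases hz with rfl | rfl | rfl | rfl | rfl <;> assumption
    · exact ⟨∅, Finset.empty_subset s, by rw [Finset.sdiff_empty]; exact hP4, by simp⟩

lemma sum_split_vertex {G : SimpleGraph V} [DecidableRel G.Adj] {s : Finset V} {v : V}
    (hv : v ∈ s) :
    ∑ w ∈ s, ((G.neighborFinset w) ∩ s).card
      = ((G.neighborFinset v) ∩ s).card + ((G.neighborFinset v) ∩ s.erase v).card
        + ∑ w ∈ s.erase v, ((G.neighborFinset w) ∩ s.erase v).card := by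
  rw [← Finset.add_sum_erase s _ hv]
  have key : ∀ w ∈ s.erase v, ((G.neighborFinset w) ∩ s).card
      = ((G.neighborFinset w) ∩ s.erase v).card + if G.Adj v w then 1 else 0 := by
    intro w hw
    by_cases hadj : G.Adj v w
    · have : (G.neighborFinset w) ∩ s = insert v ((G.neighborFinset w) ∩ s.erase v) := by
        ext z
        simp only [Finset.mem_inter, Finset.mem_insert, Finset.mem_erase,
          SimpleGraph.mem_neighborFinset]
        constructor
        · rintro ⟨hz1, hz2⟩
          by_cases hzv : z = v
          · exact Or.inl hzv
          · exact Or.inr ⟨hz1, hzv, hz2⟩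
        · rintro (rfl | ⟨hz1, _, hz2⟩)
          · exact ⟨hadj.symm, hv⟩
          · exact ⟨hz1, hz2⟩
      rw [this, Finset.card_insert_of_notMem (by simp), if_pos hadj]
    · have : (G.neighborFinset w) ∩ s = (G.neighborFinset w) ∩ s.erase v := by
        ext z
        simp only [Finset.mem_inter, Finset.mem_erase, SimpleGraph.mem_neighborFinset]
        constructor
        · rintro ⟨hz1, hz2⟩
          refine ⟨hz1, ?_, hz2⟩
          rintro rfl
          exact hadj hz1.symm
        · rintro ⟨hz1, _, hz2⟩
          exact ⟨hz1, hz2⟩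
      rw [this, if_neg hadj, add_zero]
  rw [Finset.sum_congr rfl key, Finset.sum_add_distrib]
  have : ∑ w ∈ s.erase v, (if G.Adj v w then 1 else 0)
      = ((G.neighborFinset v) ∩ s.erase v).card := by
    rw [← Finset.card_filter]
    congr 1
    ext z
    simp [Finset.mem_filter, Finset.mem_inter, SimpleGraph.mem_neighborFinset, and_comm]
  rw [this]
  ring

lemma sum_split_closed {G : SimpleGraph V} [DecidableRel G.Adj] {s T : Finset V}
    (hTs : T ⊆ s)
    (hcl : ∀ x ∈ T, (G.neighborFinset x ∩ s) ⊆ T) :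
    ∑ w ∈ s, ((G.neighborFinset w) ∩ s).card
      = ∑ x ∈ T, ((G.neighborFinset x) ∩ s).card
        + ∑ w ∈ s \ T, ((G.neighborFinset w) ∩ (s \ T)).card := by
  rw [← Finset.sum_sdiff hTs, add_comm]
  congr 1
  apply Finset.sum_congr rfl
  intro w hw
  congr 1
  ext z
  simp only [Finset.mem_inter, Finset.mem_sdiff, SimpleGraph.mem_neighborFinset] at *
  constructor
  · rintro ⟨hz1, hz2⟩
    refine ⟨hz1, hz2, ?_⟩
    intro hzT
    exact hw.2 (hcl z hzT (by simp [SimpleGraph.mem_neighborFinset, hz1.symm, hw.1]))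
  · rintro ⟨hz1, hz2, _⟩
    exact ⟨hz1, hz2⟩

lemma sum_deg_le (G : SimpleGraph V) [DecidableRel G.Adj] :
    ∀ n : ℕ, ∀ s : Finset V, s.card ≤ n →
    (¬ HasPathOfOrder (G.induce (↑s : Set V)) 4) →
    ∑ w ∈ s, ((G.neighborFinset w) ∩ s).card ≤ 2 * s.card := by
  intro n
  induction n with
  | zero =>
    intro s hs _
    have : s = ∅ := Finset.card_eq_zero.mp (Nat.le_zero.mp hs)
    subst this; simp
  | succ n ih =>
    intro s hsn hnoP4
    rcases s.eq_empty_or_nonempty with rfl | ⟨v, hv⟩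
    · simp
    have hmono : ∀ t : Finset V, t ⊆ s → ¬ HasPathOfOrder (G.induce (↑t : Set V)) 4 :=
      fun t ht h => hnoP4 (hasP4_mono (Finset.coe_subset.mpr ht) h)
    by_cases hNv : ((G.neighborFinset v) ∩ s).Nonempty
    · obtain ⟨u, hu⟩ := hNv
      rw [Finset.mem_inter, SimpleGraph.mem_neighborFinset] at hu
      obtain ⟨avu, hus⟩ := hu
      by_cases ha' : ∃ z ∈ (G.neighborFinset v) ∩ s, z ≠ u
      · by_cases hb' : ∃ z ∈ (G.neighborFinset u) ∩ s, z ≠ v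
        · -- triangle case
          obtain ⟨w1, hw1, hw1u⟩ := ha'
          obtain ⟨w2, hw2, hw2v⟩ := hb'
          rw [Finset.mem_inter, SimpleGraph.mem_neighborFinset] at hw1 hw2
          have huv : u ≠ v := avu.ne'
          have key : ∀ z1 ∈ (G.neighborFinset v) ∩ s, z1 ≠ u →
              ∀ z2 ∈ (G.neighborFinset u) ∩ s, z2 ≠ v → z1 = z2 := by
            intro z1 hz1 hz1u z2 hz2 hz2v
            rw [Finset.mem_inter, SimpleGraph.mem_neighborFinset] at hz1 hz2
            by_contra hne
            exact hnoP4 (build_path (T := (↑s : Set V)) (Finset.mem_coe.mpr hz1.2)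
              (Finset.mem_coe.mpr hv) (Finset.mem_coe.mpr hus) (Finset.mem_coe.mpr hz2.2)
              hz1.1.symm avu hz2.1 hz1u hne (Ne.symm hz2v))
          have hw12 : w1 = w2 := key w1 (by simp [Finset.mem_inter,
            SimpleGraph.mem_neighborFinset, hw1.1, hw1.2]) hw1u w2 (by simp [Finset.mem_inter,
            SimpleGraph.mem_neighborFinset, hw2.1, hw2.2]) hw2v
          subst hw12
          -- w1 adjacent to both v and u; N(w1) ∩ s ⊆ {u, v}
          have hw1v : w1 ≠ v := hw1.1.ne'
          have hNw1 : (G.neighborFinset w1) ∩ s ⊆ {u, v} := by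
            intro z hz
            rw [Finset.mem_inter, SimpleGraph.mem_neighborFinset] at hz
            simp only [Finset.mem_insert, Finset.mem_singleton]
            by_contra hzc
            push_neg at hzc
            exact hnoP4 (build_path (T := (↑s : Set V)) (Finset.mem_coe.mpr hz.2)
              (Finset.mem_coe.mpr hw1.2) (Finset.mem_coe.mpr hv) (Finset.mem_coe.mpr hus)
              hz.1.symm hw1.1.symm avu hzc.2 hzc.1 hw1u)
          have hNv2 : (G.neighborFinset v) ∩ s ⊆ {u, w1} := by
            intro z hz
            simp only [Finset.mem_insert, Finset.mem_singleton]
            by_cases hzu : z = u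
            · exact Or.inl hzu
            · exact Or.inr (key z hz hzu w1 (by simp [Finset.mem_inter,
                SimpleGraph.mem_neighborFinset, hw2.1, hw2.2]) hw2v)
          have hNu2 : (G.neighborFinset u) ∩ s ⊆ {v, w1} := by
            intro z hz
            simp only [Finset.mem_insert, Finset.mem_singleton]
            by_cases hzv : z = v
            · exact Or.inl hzv
            · exact Or.inr (key w1 (by simp [Finset.mem_inter,
                SimpleGraph.mem_neighborFinset, hw1.1, hw1.2]) hw1u z hz hzv).symm
          have hTs : ({v, u, w1} : Finset V) ⊆ s := by
            intro z hz; simp only [Finset.mem_insert, Finset.mem_singleton] at hz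
            rcases hz with rfl | rfl | rfl
            · exact hv
            · exact hus
            · exact hw1.2
          have hcl : ∀ x ∈ ({v, u, w1} : Finset V), (G.neighborFinset x ∩ s) ⊆ {v, u, w1} := by
            intro x hx
            simp only [Finset.mem_insert, Finset.mem_singleton] at hx
            rcases hx with rfl | rfl | rfl
            · exact fun z hz => by
                rcases Finset.mem_insert.mp (hNv2 hz) with rfl | h <;> simp_all
            · exact fun z hz => by
                rcases Finset.mem_insert.mp (hNu2 hz) with rfl | h <;> simp_all
            · exact fun z hz => by
                rcases Finset.mem_insert.mp (hNw1 hz) with rfl | h <;> simp_all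
          rw [sum_split_closed hTs hcl]
          have hTcard : ({v, u, w1} : Finset V).card = 3 :=
            card_eq3 avu.ne hw1v.symm hw1u.symm
          have hsum3 : ∑ x ∈ ({v, u, w1} : Finset V), ((G.neighborFinset x) ∩ s).card ≤ 6 := by
            rw [Finset.sum_insert (by simp [avu.ne, hw1v.symm]),
              Finset.sum_insert (by simp [hw1u.symm])]
            rw [Finset.sum_singleton]
            have b1 := le_trans (Finset.card_le_card hNv2) (card_le2 u w1)
            have b2 := le_trans (Finset.card_le_card hNu2) (card_le2 v w1)
            have b3 := le_trans (Finset.card_le_card hNw1) (card_le2 u v)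
            omega
          have hrec := ih (s \ {v, u, w1}) (by
            have := Finset.card_sdiff_of_subset hTs
            have := Finset.card_le_card hTs
            omega) (hmono _ Finset.sdiff_subset)
          have hc1 := Finset.card_sdiff_of_subset hTs
          have hc2 := Finset.card_le_card hTs
          rw [hTcard] at hc1 hc2
          omega
        · -- u has degree 1 within s
          push_neg at hb'
          have hNu1 : (G.neighborFinset u) ∩ s ⊆ {v} := fun z hz =>
            Finset.mem_singleton.mpr (hb' z hz)
          rw [sum_split_vertex hus]
          have b1 := le_trans (Finset.card_le_card hNu1) (Finset.card_singleton v).le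
          have b2 : ((G.neighborFinset u) ∩ s.erase u).card ≤ 1 :=
            le_trans (Finset.card_le_card (Finset.inter_subset_inter (le_refl _)
              (Finset.erase_subset _ _) |>.trans hNu1)) (Finset.card_singleton v).le
          have hrec := ih (s.erase u) (by
            have := Finset.card_erase_of_mem hus
            have := Finset.card_pos.mpr ⟨u, hus⟩
            omega) (hmono _ (Finset.erase_subset _ _))
          have hc := Finset.card_erase_of_mem hus
          have := Finset.card_pos.mpr ⟨u, hus⟩
          omega
      · -- v has degree 1 within s
        push_neg at ha'
        have hNv1 : (G.neighborFinset v) ∩ s ⊆ {u} := fun z hz =>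
          Finset.mem_singleton.mpr (ha' z hz)
        rw [sum_split_vertex hv]
        have b1 := le_trans (Finset.card_le_card hNv1) (Finset.card_singleton u).le
        have b2 : ((G.neighborFinset v) ∩ s.erase v).card ≤ 1 :=
          le_trans (Finset.card_le_card (Finset.inter_subset_inter (le_refl _)
            (Finset.erase_subset _ _) |>.trans hNv1)) (Finset.card_singleton u).le
        have hrec := ih (s.erase v) (by
          have := Finset.card_erase_of_mem hv
          have := Finset.card_pos.mpr ⟨v, hv⟩
          omega) (hmono _ (Finset.erase_subset _ _))
        have hc := Finset.card_erase_of_mem hv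
        have := Finset.card_pos.mpr ⟨v, hv⟩
        omega
    · -- v isolated within s
      rw [Finset.not_nonempty_iff_eq_empty] at hNv
      have b2 : ((G.neighborFinset v) ∩ s.erase v) = ∅ := by
        rw [← Finset.subset_empty, ← hNv]
        exact Finset.inter_subset_inter (le_refl _) (Finset.erase_subset _ _)
      rw [sum_split_vertex hv, hNv, b2]
      have hrec := ih (s.erase v) (by
        have := Finset.card_erase_of_mem hv
        have := Finset.card_pos.mpr ⟨v, hv⟩
        omega) (hmono _ (Finset.erase_subset _ _))
      have hc := Finset.card_erase_of_mem hv
      have := Finset.card_pos.mpr ⟨v, hv⟩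
      simp only [Finset.card_empty]
      omega

lemma sum_nbr_swap (G : SimpleGraph V) [DecidableRel G.Adj] (S F : Finset V) :
    ∑ v ∈ S, ((G.neighborFinset v) ∩ F).card = ∑ f ∈ F, ((G.neighborFinset f) ∩ S).card := by
  have h : ∀ (v : V) (T : Finset V), (G.neighborFinset v) ∩ T
      = T.filter (fun z => G.Adj v z) := by
    intro v T; ext z
    simp [Finset.mem_inter, Finset.mem_filter, SimpleGraph.mem_neighborFinset, and_comm]
  simp only [h, Finset.card_filter]
  rw [Finset.sum_comm]
  apply Finset.sum_congr rfl
  intro f _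
  apply Finset.sum_congr rfl
  intro v _
  simp [SimpleGraph.adj_comm]

lemma cover_lower {G : SimpleGraph V} [DecidableRel G.Adj] {d : ℕ} (hd : 2 ≤ d)
    (hreg : G.IsRegularOfDegree d) (F : Finset V)
    (hcov : ¬ HasPathOfOrder (G.induce (↑(Finset.univ \ F) : Set V)) 4) :
    (d - 2) * Fintype.card V ≤ (2 * d - 2) * F.card := by
  set S := Finset.univ \ F with hS
  have h1 : ∑ w ∈ S, ((G.neighborFinset w) ∩ S).card ≤ 2 * S.card :=
    sum_deg_le G S.card S le_rfl hcov
  have h2 : ∀ v : V, ((G.neighborFinset v) ∩ S).card + ((G.neighborFinset v) ∩ F).card = d := by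
    intro v
    have he : (G.neighborFinset v) ∩ S = (G.neighborFinset v) \ F := by
      ext z; simp [hS]
    rw [he, Finset.card_sdiff_add_card_inter]
    exact hreg v
  have h4 : ∑ f ∈ F, ((G.neighborFinset f) ∩ S).card ≤ d * F.card := by
    rw [mul_comm]
    refine le_trans (Finset.sum_le_card_nsmul _ _ d ?_) (by rw [smul_eq_mul])
    intro f _
    exact le_trans (Finset.card_le_card Finset.inter_subset_left) (le_of_eq (hreg f))
  have h5 : d * S.card = ∑ v ∈ S, ((G.neighborFinset v) ∩ S).card
      + ∑ v ∈ S, ((G.neighborFinset v) ∩ F).card := by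
    rw [← Finset.sum_add_distrib, Finset.sum_congr rfl (fun v _ => h2 v),
      Finset.sum_const, smul_eq_mul, mul_comm]
  have h6 : d * S.card ≤ 2 * S.card + d * F.card := by
    rw [h5, sum_nbr_swap G S F]
    exact add_le_add h1 h4
  have h7 : S.card = Fintype.card V - F.card := by
    rw [hS, Finset.card_sdiff_of_subset (Finset.subset_univ F), Finset.card_univ]
  have h8 : F.card ≤ Fintype.card V := by
    rw [← Finset.card_univ]; exact Finset.card_le_card (Finset.subset_univ F)
  obtain ⟨e, rfl⟩ : ∃ e, d = e + 2 := ⟨d - 2, by omega⟩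
  have hg1 : e + 2 - 2 = e := by omega
  have hg2 : 2 * (e + 2) - 2 = 2 * e + 2 := by omega
  rw [hg1, hg2]
  have h9 : e * S.card ≤ (e + 2) * F.card := by nlinarith
  have h10 : S.card + F.card = Fintype.card V := by omega
  nlinarith

lemma pair_sum (f : ℕ → ℕ) : ∀ k : ℕ,
    ∑ i ∈ Finset.Icc 1 k, (f (2 * i - 1) + f (2 * i)) = ∑ j ∈ Finset.Icc 1 (2 * k), f j := by
  intro k
  induction k with
  | zero => simp
  | succ k ihk =>
    have e1 : Finset.Icc 1 (k + 1) = insert (k + 1) (Finset.Icc 1 k) := by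
      ext z; simp [Finset.mem_Icc]; omega
    have e2 : Finset.Icc 1 (2 * (k + 1)) = insert (2 * k + 2)
        (insert (2 * k + 1) (Finset.Icc 1 (2 * k))) := by
      ext z; simp [Finset.mem_Icc]; omega
    rw [e1, e2, Finset.sum_insert (by simp only [Finset.mem_insert, Finset.mem_Icc]; omega),
      Finset.sum_insert (by simp only [Finset.mem_insert, Finset.mem_Icc]; omega),
      Finset.sum_insert (by simp only [Finset.mem_insert, Finset.mem_Icc]; omega), ihk]
    have e3 : 2 * (k + 1) - 1 = 2 * k + 1 := by omega
    have e4 : 2 * (k + 1) = 2 * k + 2 := by omega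
    rw [e3, e4]
    ring

lemma psi_lower {G : SimpleGraph V} [DecidableRel G.Adj] {d : ℕ} (hd : 2 ≤ d)
    (hreg : G.IsRegularOfDegree d) :
    (d - 2) * Fintype.card V ≤ (2 * d - 2) * psi G 4 := by
  have huniv : IsPathVertexCover G 4 Finset.univ := by
    rintro ⟨u, v, w, _⟩
    have := u.2
    simp at this
  have hne : {n | ∃ F : Finset V, IsPathVertexCover G 4 F ∧ F.card = n}.Nonempty :=
    ⟨(Finset.univ : Finset V).card, Finset.univ, huniv, rfl⟩
  obtain ⟨F₀, hcov₀, hcard₀⟩ := Nat.sInf_mem hne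
  have hpsieq : psi G 4 = sInf {n | ∃ F : Finset V, IsPathVertexCover G 4 F ∧ F.card = n} := rfl
  rw [hpsieq, ← hcard₀]
  apply cover_lower hd hreg
  have hset : (↑(Finset.univ \ F₀) : Set V) = (↑F₀ : Set V)ᶜ := by
    simp [Finset.coe_sdiff, Set.diff_eq]
  rw [hset]
  exact hcov₀

lemma arith2 (j n sB Uc m Fc : ℕ)
    (h1 : 5 * Uc + 2 * sB ≤ 2 * n) (h2 : sB ≤ (j + 1) * m) (h3 : m ≤ n)
    (h4 : Fc + m = n)
    (hch : (6 * j + 10) * n < (6 * j + 16) * (Uc + sB)) :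
    (6 * j + 16) * Fc ≤ (6 * j + 10) * n := by
  have a1 : (18 * j + 18) * n < (18 * j + 48) * sB := by
    nlinarith [mul_le_mul_right h1 (6 * j + 16)]
  have a3 : (j + 1) * (18 * n) < (j + 1) * ((18 * j + 48) * m) :=
    calc (j + 1) * (18 * n) = (18 * j + 18) * n := by ring
    _ < (18 * j + 48) * sB := a1
    _ ≤ (18 * j + 48) * ((j + 1) * m) := mul_le_mul_right h2 _
    _ = (j + 1) * ((18 * j + 48) * m) := by ring
  have key : 18 * n < (18 * j + 48) * m := Nat.lt_of_mul_lt_mul_left a3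
  have e1 : (18 * j + 48) * m = 3 * ((6 * j + 16) * m) := by ring
  have e2 : (6 * j + 16) * Fc + (6 * j + 16) * m = (6 * j + 10) * n + 6 * n := by
    rw [← Nat.left_distrib, h4]; ring
  rw [e1] at key
  generalize (6 * j + 16) * m = X at key e2
  omega

lemma partc {d n Fc p : ℕ} (hb : (3 * d + 4) * Fc ≤ (3 * d - 2) * n)
    (hp : (d - 2) * n ≤ (2 * d - 2) * p) :
    ((3 * d + 4) * (d - 2)) * Fc ≤ ((3 * d - 2) * (2 * d - 2)) * p :=
  calc (3 * d + 4) * (d - 2) * Fc = (d - 2) * ((3 * d + 4) * Fc) := by ring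
    _ ≤ (d - 2) * ((3 * d - 2) * n) := Nat.mul_le_mul_left _ hb
    _ = (3 * d - 2) * ((d - 2) * n) := by ring
    _ ≤ (3 * d - 2) * ((2 * d - 2) * p) := Nat.mul_le_mul_left _ hp
    _ = (3 * d - 2) * (2 * d - 2) * p := by ring

end Aux

/-- Correctness and approximation guarantee of algorithm `Approx2` on
`d`-regular graphs for even `d ≥ 4`.  Here `R i` is the remaining vertex set
after removing `V_1, …, V_i`, the sets `V_i` are as computed by the
algorithm, and `U` is a minimum `4`-path vertex cover of `G[R (d-2)]`.
(a) `U ∪ V_1 ∪ ⋯ ∪ V_{d-2}` and each `V ∖ (V_{2i-1} ∪ V_{2i})` are `4`-path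
vertex covers; (b) the smallest of these `d/2` covers has size at most
`((3d-2)/(3d+4))·|V|`, and (c) at most
`((3d-2)(2d-2))/((3d+4)(d-2)) · ψ₄(G)`. -/
theorem stmt_13 {V : Type*} [Fintype V] [DecidableEq V] (G : SimpleGraph V)
    [DecidableRel G.Adj]
    (d : ℕ) (hd4 : 4 ≤ d) (hdeven : Even d) (hreg : G.IsRegularOfDegree d)
    (Vs R : ℕ → Finset V)
    (hR : ∀ i, R i = Finset.univ \ (Finset.Icc 1 i).biUnion Vs)
    (hdisj : ∀ i ∈ Finset.Icc 1 (d - 2), ∀ j ∈ Finset.Icc 1 (d - 2), i ≠ j →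
      Disjoint (Vs i) (Vs j))
    (hsub : ∀ i ∈ Finset.Icc 1 (d - 2), Vs i ⊆ R (i - 1))
    (hindep : ∀ i ∈ Finset.Icc 1 (d - 2), ∀ u ∈ Vs i, ∀ v ∈ Vs i, ¬G.Adj u v)
    (hdeg : ∀ i ∈ Finset.Icc 1 (d - 2), ∀ v ∈ Vs i,
      ((G.neighborFinset v) ∩ R (i - 1)).card = d - i + 1)
    (hmax : ∀ i ∈ Finset.Icc 1 (d - 2), ∀ v ∈ R i,
      ((G.neighborFinset v) ∩ R i).card ≤ d - i)
    (U : Finset V) (hUsub : U ⊆ R (d - 2))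
    (hUcov : ¬ HasPathOfOrder (G.induce (↑(R (d - 2) \ U) : Set V)) 4)
    (hUmin : ∀ U' ⊆ R (d - 2),
      ¬ HasPathOfOrder (G.induce (↑(R (d - 2) \ U') : Set V)) 4 → U.card ≤ U'.card) :
    (IsPathVertexCover G 4 (U ∪ (Finset.Icc 1 (d - 2)).biUnion Vs) ∧
      ∀ i ∈ Finset.Icc 1 (d / 2 - 1),
        IsPathVertexCover G 4 (Finset.univ \ (Vs (2 * i - 1) ∪ Vs (2 * i)))) ∧
    ∃ F : Finset V,
      (F = U ∪ (Finset.Icc 1 (d - 2)).biUnion Vs ∨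
        ∃ i ∈ Finset.Icc 1 (d / 2 - 1),
          F = Finset.univ \ (Vs (2 * i - 1) ∪ Vs (2 * i))) ∧
      (3 * d + 4) * F.card ≤ (3 * d - 2) * Fintype.card V ∧
      ((3 * d + 4) * (d - 2)) * F.card ≤ ((3 * d - 2) * (2 * d - 2)) * psi G 4 := by
  obtain ⟨k, hk⟩ := hdeven
  have hk2 : 2 ≤ k := by omega
  -- Part a1
  have cover1 : IsPathVertexCover G 4 (U ∪ (Finset.Icc 1 (d - 2)).biUnion Vs) := by
    unfold IsPathVertexCover
    have hset : ((↑(U ∪ (Finset.Icc 1 (d - 2)).biUnion Vs) : Set V)ᶜ)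
        = ↑(R (d - 2) \ U) := by
      rw [hR]
      ext x
      simp only [Finset.coe_union, Set.mem_compl_iff, Set.mem_union, Finset.mem_coe,
        Finset.coe_sdiff, Set.mem_diff, Finset.mem_sdiff, Finset.mem_univ, true_and]
      tauto
    rw [hset]
    exact hUcov
  -- Part a2
  have cover2 : ∀ i ∈ Finset.Icc 1 (d / 2 - 1),
      IsPathVertexCover G 4 (Finset.univ \ (Vs (2 * i - 1) ∪ Vs (2 * i))) := by
    intro i hi
    rw [Finset.mem_Icc] at hi
    have hid : 1 ≤ i ∧ i ≤ k - 1 := by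
      constructor
      · exact hi.1
      · have := hi.2; omega
    have hj1 : 2 * i - 1 ∈ Finset.Icc 1 (d - 2) := by rw [Finset.mem_Icc]; omega
    have hj2 : 2 * i ∈ Finset.Icc 1 (d - 2) := by rw [Finset.mem_Icc]; omega
    have h2ile : 2 * i ≤ d - 2 := (Finset.mem_Icc.mp hj2).2
    intro h
    have hset : ((↑(Finset.univ \ (Vs (2 * i - 1) ∪ Vs (2 * i))) : Set V)ᶜ)
        = ↑(Vs (2 * i - 1) ∪ Vs (2 * i)) := by
      ext x
      simp only [Finset.coe_sdiff, Finset.coe_univ, Set.mem_compl_iff, Set.mem_diff,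
        Set.mem_univ, true_and, Finset.mem_coe, Finset.mem_union, not_not, Finset.coe_union,
        Set.mem_union]
    rw [hset] at h
    obtain ⟨a, b, c, e, ha, hb, hc, he, h1, h2, h3, n1, n2, n3, n4, n5, n6⟩ := extract_path h
    have hm : ∀ x : V, x ∈ (↑(Vs (2 * i - 1) ∪ Vs (2 * i)) : Set V) →
        x ∈ Vs (2 * i - 1) ∨ x ∈ Vs (2 * i) := by
      intro x hx; simpa [Finset.mem_union] using hx
    have hBbound : ∀ b' ∈ Vs (2 * i), ((G.neighborFinset b') ∩ Vs (2 * i - 1)).card ≤ 1 := by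
      intro b' hb'
      have hb'R : b' ∈ R (2 * i - 1) := hsub (2 * i) hj2 hb'
      have hRspl : R (2 * i - 1) = R (2 * i - 2) \ Vs (2 * i - 1) := by
        rw [hR, hR]
        have hIcc : Finset.Icc 1 (2 * i - 1)
            = insert (2 * i - 1) (Finset.Icc 1 (2 * i - 2)) := by
          ext z; simp only [Finset.mem_Icc, Finset.mem_insert]; omega
        rw [hIcc, Finset.biUnion_insert]
        ext z; simp only [Finset.mem_sdiff, Finset.mem_univ, true_and, Finset.mem_union,
          not_or]
        tauto
      have hsubA : Vs (2 * i - 1) ⊆ R (2 * i - 2) := by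
        have hh := hsub (2 * i - 1) hj1
        have e1 : 2 * i - 1 - 1 = 2 * i - 2 := by omega
        rwa [e1] at hh
      have hcard1 : ((G.neighborFinset b') ∩ R (2 * i - 1)).card = d - 2 * i + 1 :=
        hdeg (2 * i) hj2 b' hb'
      have hup : ((G.neighborFinset b') ∩ R (2 * i - 2)).card ≤ d - (2 * i - 2) := by
        rcases Nat.lt_or_ge i 2 with hlt | hge
        · have hi1' : i = 1 := by omega
          subst hi1'
          have hz : (2 * 1 - 2 : ℕ) = 0 := by norm_num
          rw [hz]
          have hR0 : R 0 = Finset.univ := by rw [hR]; simp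
          rw [hR0, Finset.inter_univ]
          have hdb : (G.neighborFinset b').card = d := hreg b'
          omega
        · have hmem22 : 2 * i - 2 ∈ Finset.Icc 1 (d - 2) := by rw [Finset.mem_Icc]; omega
          apply hmax _ hmem22
          rw [hRspl] at hb'R
          exact Finset.sdiff_subset hb'R
      have hunion : (G.neighborFinset b') ∩ R (2 * i - 2)
          = ((G.neighborFinset b') ∩ R (2 * i - 1))
            ∪ ((G.neighborFinset b') ∩ Vs (2 * i - 1)) := by
        rw [hRspl]
        ext z
        simp only [Finset.mem_inter, Finset.mem_union, Finset.mem_sdiff]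
        constructor
        · rintro ⟨hz1, hz2⟩
          by_cases hzA : z ∈ Vs (2 * i - 1)
          · exact Or.inr ⟨hz1, hzA⟩
          · exact Or.inl ⟨hz1, hz2, hzA⟩
        · rintro (⟨hz1, hz2, _⟩ | ⟨hz1, hz2⟩)
          · exact ⟨hz1, hz2⟩
          · exact ⟨hz1, hsubA hz2⟩
      have hdisj2 : Disjoint ((G.neighborFinset b') ∩ R (2 * i - 1))
          ((G.neighborFinset b') ∩ Vs (2 * i - 1)) := by
        rw [hRspl]
        apply Finset.disjoint_left.mpr
        intro z hz1 hz2
        exact (Finset.mem_sdiff.mp (Finset.mem_inter.mp hz1).2).2 (Finset.mem_inter.mp hz2).2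
      have hsplit : ((G.neighborFinset b') ∩ R (2 * i - 2)).card
          = ((G.neighborFinset b') ∩ R (2 * i - 1)).card
            + ((G.neighborFinset b') ∩ Vs (2 * i - 1)).card := by
        rw [hunion, Finset.card_union_of_disjoint hdisj2]
      omega
    have hdisjAB : ∀ x, x ∈ Vs (2 * i - 1) → x ∈ Vs (2 * i) → False := by
      intro x hxA hxB
      exact (Finset.disjoint_left.mp (hdisj _ hj1 _ hj2 (by omega))) hxA hxB
    have indepA := hindep _ hj1
    have indepB := hindep _ hj2
    have two_in_A : ∀ b' ∈ Vs (2 * i), ∀ p ∈ Vs (2 * i - 1), ∀ q ∈ Vs (2 * i - 1),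
        p ≠ q → G.Adj b' p → G.Adj b' q → False := by
      intro b' hb' p hp q hq hpq hp1 hq1
      have hsub2 : ({p, q} : Finset V) ⊆ (G.neighborFinset b') ∩ Vs (2 * i - 1) := by
        intro z hz
        simp only [Finset.mem_insert, Finset.mem_singleton] at hz
        rcases hz with rfl | rfl <;>
          simp [Finset.mem_inter, SimpleGraph.mem_neighborFinset, *]
      have hcc := Finset.card_le_card hsub2
      rw [Finset.card_insert_of_notMem (by simp [hpq]), Finset.card_singleton] at hcc
      have := hBbound b' hb'
      omega
    rcases hm b hb with hbA | hbB
    · rcases hm c hc with hcA | hcB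
      · exact indepA b hbA c hcA h2
      · rcases hm e he with heA | heB
        · exact two_in_A c hcB b hbA e heA n5 h2.symm h3
        · exact indepB c hcB e heB h3
    · rcases hm a ha with haA | haB
      · rcases hm c hc with hcA | hcB
        · exact two_in_A b hbB a haA c hcA n2 h1.symm h2
        · exact indepB b hbB c hcB h2
      · exact indepB a haB b hbB h1
  -- sizes
  have hBcard : ((Finset.Icc 1 (d - 2)).biUnion Vs).card
      = ∑ j ∈ Finset.Icc 1 (d - 2), (Vs j).card := Finset.card_biUnion hdisj
  have hpair := pair_sum (fun j => (Vs j).card) (k - 1)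
  have h2k : 2 * (k - 1) = d - 2 := by omega
  rw [h2k] at hpair
  have hneI : (Finset.Icc 1 (k - 1)).Nonempty := ⟨1, by rw [Finset.mem_Icc]; omega⟩
  have hsel : ∃ i0 ∈ Finset.Icc 1 (k - 1), ((Finset.Icc 1 (d - 2)).biUnion Vs).card
      ≤ (k - 1) * ((Vs (2 * i0 - 1)).card + (Vs (2 * i0)).card) := by
    by_contra hcon
    push_neg at hcon
    have hsum : ∑ i ∈ Finset.Icc 1 (k - 1),
        (k - 1) * ((Vs (2 * i - 1)).card + (Vs (2 * i)).card)
        < ∑ _i ∈ Finset.Icc 1 (k - 1), ((Finset.Icc 1 (d - 2)).biUnion Vs).card :=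
      Finset.sum_lt_sum_of_nonempty hneI (fun i hi => hcon i hi)
    rw [Finset.sum_const, ← Finset.mul_sum, hpair, ← hBcard] at hsum
    have hIcard : (Finset.Icc 1 (k - 1)).card = k - 1 := by rw [Nat.card_Icc]; omega
    rw [hIcard, smul_eq_mul] at hsum
    exact lt_irrefl _ hsum
  obtain ⟨i0, hi0mem, hi0⟩ := hsel
  rw [Finset.mem_Icc] at hi0mem
  have hj1' : 2 * i0 - 1 ∈ Finset.Icc 1 (d - 2) := by rw [Finset.mem_Icc]; omega
  have hj2' : 2 * i0 ∈ Finset.Icc 1 (d - 2) := by rw [Finset.mem_Icc]; omega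
  have hi0mem' : i0 ∈ Finset.Icc 1 (d / 2 - 1) := by rw [Finset.mem_Icc]; omega
  have hRdeg : ∀ v ∈ R (d - 2), ((G.neighborFinset v) ∩ R (d - 2)).card ≤ 2 := by
    intro v hv
    have hh := hmax (d - 2) (by rw [Finset.mem_Icc]; omega) v hv
    have e : d - (d - 2) = 2 := by omega
    rwa [e] at hh
  obtain ⟨F1, hF1sub, hF1cov, hF1card⟩ :=
    maxdeg2_cover G (R (d - 2)).card (R (d - 2)) le_rfl hRdeg
  have hUcard : 5 * U.card ≤ 2 * (R (d - 2)).card :=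
    le_trans (Nat.mul_le_mul_left 5 (hUmin F1 hF1sub hF1cov)) hF1card
  have hBle : ((Finset.Icc 1 (d - 2)).biUnion Vs).card ≤ Fintype.card V := by
    rw [← Finset.card_univ]; exact Finset.card_le_card (Finset.subset_univ _)
  have hRcard : (R (d - 2)).card + ((Finset.Icc 1 (d - 2)).biUnion Vs).card
      = Fintype.card V := by
    rw [hR, Finset.card_sdiff_of_subset (Finset.subset_univ _), Finset.card_univ]
    omega
  have hmcard : (Vs (2 * i0 - 1) ∪ Vs (2 * i0)).card
      = (Vs (2 * i0 - 1)).card + (Vs (2 * i0)).card :=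
    Finset.card_union_of_disjoint (hdisj _ hj1' _ hj2' (by omega))
  have hmle : (Vs (2 * i0 - 1) ∪ Vs (2 * i0)).card ≤ Fintype.card V := by
    rw [← Finset.card_univ]; exact Finset.card_le_card (Finset.subset_univ _)
  have hFicard : (Finset.univ \ (Vs (2 * i0 - 1) ∪ Vs (2 * i0))).card
      + (Vs (2 * i0 - 1) ∪ Vs (2 * i0)).card = Fintype.card V := by
    rw [Finset.card_sdiff_of_subset (Finset.subset_univ _), Finset.card_univ]
    omega
  have hpsi := psi_lower (by omega : 2 ≤ d) hreg
  by_cases hch : (3 * d + 4) * (U.card + ((Finset.Icc 1 (d - 2)).biUnion Vs).card)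
      ≤ (3 * d - 2) * Fintype.card V
  · refine ⟨⟨cover1, cover2⟩, U ∪ (Finset.Icc 1 (d - 2)).biUnion Vs, Or.inl rfl, ?_, ?_⟩
    · exact le_trans (Nat.mul_le_mul_left _ (Finset.card_union_le _ _)) hch
    · exact partc (le_trans (Nat.mul_le_mul_left _ (Finset.card_union_le _ _)) hch) hpsi
  · push_neg at hch
    have hb2 : (3 * d + 4) * (Finset.univ \ (Vs (2 * i0 - 1) ∪ Vs (2 * i0))).card
        ≤ (3 * d - 2) * Fintype.card V := by
      have e5 : 6 * (k - 2) + 10 = 3 * d - 2 := by omega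
      have e6 : 6 * (k - 2) + 16 = 3 * d + 4 := by omega
      have e7 : (k - 2) + 1 = k - 1 := by omega
      have := arith2 (k - 2) (Fintype.card V)
        ((Finset.Icc 1 (d - 2)).biUnion Vs).card U.card
        ((Vs (2 * i0 - 1)).card + (Vs (2 * i0)).card)
        (Finset.univ \ (Vs (2 * i0 - 1) ∪ Vs (2 * i0))).card
        (by omega) (by rw [e7]; exact hi0) (by omega) (by omega) (by rw [e5, e6]; exact hch)
      rwa [e5, e6] at this
    exact ⟨⟨cover1, cover2⟩, Finset.univ \ (Vs (2 * i0 - 1) ∪ Vs (2 * i0)),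
      Or.inr ⟨i0, hi0mem', rfl⟩, hb2, partc hb2 hpsi⟩
end
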